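/- arXiv:1102.0373 — 9 statements merged into one kernel-verified Lean document; each statement's English description precedes it below -/
import Mathlib

section
/- Let N ≥ 2 be an integer, 0 < γ ≤ 2, s ≥ 0, let b : [−1,1] → [0,∞) be measurable with A₀ := ∫_{S^{N−1}} b(e·σ) dσ < ∞ (independent of the unit vector e), and let B : ℝ^N × S^{N−1} → [0,∞) be measurable with B(z,σ) ≤ (1+|z|²)^{γ/2} b((z/|z|)·σ) for all z ≠ 0 and all σ (with z/|z| replaced by a fixed unit vector when z = 0); set A(z) := ∫_{S^{N−1}} B(z,σ) dσ. Then for all μ, ν ∈ B_{s+γ}⁺(ℝ^N) and every Borel function ψ : ℝ^N → ℝ with |ψ(v)| ≤ ⟨v⟩^s for all v, one has ∬_{ℝ^N×ℝ^N} (∫_{S^{N−1}} B(v−v_*,σ) |ψ(v')| dσ) dμ(v) dν(v_*) ≤ 2^{(s+γ)/2} A₀ (‖μ‖_{s+γ}‖ν‖₀ + ‖μ‖₀‖ν‖_{s+γ}), and ∬_{ℝ^N×ℝ^N} A(v−v_*) |ψ(v)| dμ(v) dν(v_*) ≤ 2^{(s+γ)/2} A₀ (‖μ‖_{s+γ}‖ν‖₀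 + ‖μ‖₀‖ν‖_{s+γ}). -/
/-!
Since `|v'|² ≤ |v|² + |v_*|²` and `|v - v_*|² ≤ 2(|v|² + |v_*|²)`, writing `x = ⟨v⟩²`,
`y = ⟨v_*⟩²` and `p = (s+γ)/2`, the weight `⟨v - v_*⟩^γ ⟨v'⟩^s` (and likewise
`⟨v - v_*⟩^γ ⟨v⟩^s`) is at most `2^{γ/2} (x + y)^p ≤ 2^p (x^p + y^p)`: for `p ≤ 1` by
subadditivity of `x ↦ x^p`, for `p ≥ 1` by its convexity, where `γ ≤ 2` absorbs the
factor `2^{p-1}`. The angular integral of `b` contributes `A₀`, and the double integral of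
`⟨v⟩^{s+γ} + ⟨v_*⟩^{s+γ}` splits into products of moments.
-/

open Real MeasureTheory Metric Classical
open scoped ENNReal NNReal RealInnerProductSpace

/-- The surface measure on the unit sphere `S^{N-1} ⊆ ℝ^N`. -/
noncomputable def sphereMeasure (N : ℕ) :
    Measure (sphere (0 : EuclideanSpace ℝ (Fin N)) 1) :=
  (volume : Measure (EuclideanSpace ℝ (Fin N))).toSphere

/-- The post-collisional velocity `v' = (v+v_*)/2 + (|v-v_*|/2)σ`. -/
noncomputable def vprime {N : ℕ} (v w : EuclideanSpace ℝ (Fin N))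
    (σ : sphere (0 : EuclideanSpace ℝ (Fin N)) 1) : EuclideanSpace ℝ (Fin N) :=
  (2⁻¹ : ℝ) • (v + w) + (‖v - w‖ / 2) • (σ : EuclideanSpace ℝ (Fin N))

/-- The weighted norm `‖μ‖ₛ = ∫ ⟨v⟩^s dμ`, `⟨v⟩ = (1+|v|²)^{1/2}`, valued in `ℝ≥0∞`. -/
noncomputable def wnorm {N : ℕ} (s : ℝ) (μ : Measure (EuclideanSpace ℝ (Fin N))) : ℝ≥0∞ :=
  ∫⁻ v, ENNReal.ofReal ((1 + ‖v‖ ^ 2) ^ (s / 2)) ∂μ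

lemma Real.add_rpow_le_two_rpow_sub_mul {a b p q : ℝ} (ha : 0 ≤ a) (hb : 0 ≤ b) (hp : 0 ≤ p)
    (hqp : q ≤ p) (hq1 : q ≤ 1) :
    (a + b) ^ p ≤ 2 ^ (p - q) * (a ^ p + b ^ p) := by
  rcases le_total p 1 with hp1 | hp1
  · calc (a + b) ^ p ≤ a ^ p + b ^ p := Real.rpow_add_le_add_rpow ha hb hp hp1
      _ ≤ 2 ^ (p - q) * (a ^ p + b ^ p) :=
        le_mul_of_one_le_left (by positivity) (Real.one_le_rpow one_le_two (by linarith))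
  · lift a to ℝ≥0 using ha
    lift b to ℝ≥0 using hb
    calc ((a : ℝ) + b) ^ p ≤ 2 ^ (p - 1) * ((a : ℝ) ^ p + (b : ℝ) ^ p) := by
          exact_mod_cast NNReal.rpow_add_le_mul_rpow_add_rpow a b hp1
      _ ≤ 2 ^ (p - q) * ((a : ℝ) ^ p + (b : ℝ) ^ p) := by
          gcongr
          exact one_le_two

lemma rpow_mul_rpow_le_two_rpow_mul_add {a b U T s γ : ℝ} (ha : 0 ≤ a) (hb : 0 ≤ b)
    (hs : 0 ≤ s) (hγ : 0 ≤ γ) (hγ2 : γ ≤ 2) (hU0 : 0 ≤ U) (hU : U ≤ 2 * (a + b))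
    (hT0 : 0 ≤ T) (hT : T ≤ a + b) :
    U ^ (γ / 2) * T ^ (s / 2) ≤ 2 ^ ((s + γ) / 2) * (a ^ ((s + γ) / 2) + b ^ ((s + γ) / 2)) :=
  calc U ^ (γ / 2) * T ^ (s / 2) ≤ (2 * (a + b)) ^ (γ / 2) * (a + b) ^ (s / 2) := by
        gcongr
    _ = 2 ^ (γ / 2) * (a + b) ^ ((s + γ) / 2) := by
        rw [Real.mul_rpow zero_le_two (by positivity), mul_assoc, add_div,
          Real.rpow_add_of_nonneg (by positivity) (by positivity) (by positivity), mul_comm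
          ((a + b) ^ (s / 2))]
    _ ≤ 2 ^ (γ / 2) * (2 ^ ((s + γ) / 2 - γ / 2) * (a ^ ((s + γ) / 2) + b ^ ((s + γ) / 2))) := by
        gcongr
        exact Real.add_rpow_le_two_rpow_sub_mul ha hb (by positivity) (by linarith) (by linarith)
    _ = 2 ^ ((s + γ) / 2) * (a ^ ((s + γ) / 2) + b ^ ((s + γ) / 2)) := by
        rw [← mul_assoc, ← Real.rpow_add two_pos]
        ring_nf

lemma norm_sub_sq_le_two_mul {E : Type*} [SeminormedAddCommGroup E] (v w : E) :
    ‖v - w‖ ^ 2 ≤ 2 * (‖v‖ ^ 2 + ‖w‖ ^ 2) := by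
  nlinarith [norm_sub_le v w, norm_nonneg (v - w), sq_nonneg (‖v‖ - ‖w‖)]

lemma norm_vprime_sq_le {N : ℕ} (v w : EuclideanSpace ℝ (Fin N))
    (σ : sphere (0 : EuclideanSpace ℝ (Fin N)) 1) :
    ‖vprime v w σ‖ ^ 2 ≤ ‖v‖ ^ 2 + ‖w‖ ^ 2 := by
  have hσ : ‖(σ : EuclideanSpace ℝ (Fin N))‖ = 1 := mem_sphere_zero_iff_norm.mp σ.2
  have htri : ‖vprime v w σ‖ ≤ ‖v + w‖ / 2 + ‖v - w‖ / 2 := by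
    refine (norm_add_le _ _).trans_eq ?_
    rw [norm_smul, norm_smul, hσ, mul_one, Real.norm_of_nonneg (by positivity),
      Real.norm_of_nonneg (by positivity)]
    ring
  have hpar := parallelogram_law_with_norm ℝ v w
  nlinarith [norm_nonneg (vprime v w σ), sq_nonneg (‖v + w‖ - ‖v - w‖)]

lemma wnorm_zero {N : ℕ} (μ : Measure (EuclideanSpace ℝ (Fin N))) :
    wnorm 0 μ = μ Set.univ := by
  simp [wnorm]

lemma lintegral_lintegral_le_wnorm {N : ℕ} {s A₀ : ℝ} {μ ν : Measure (EuclideanSpace ℝ (Fin N))}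
    {F : EuclideanSpace ℝ (Fin N) → EuclideanSpace ℝ (Fin N) → ℝ≥0∞}
    (hF : ∀ v w, F v w ≤ ENNReal.ofReal (2 ^ (s / 2) *
      ((1 + ‖v‖ ^ 2) ^ (s / 2) + (1 + ‖w‖ ^ 2) ^ (s / 2))) * ENNReal.ofReal A₀) :
    ∫⁻ v, ∫⁻ w, F v w ∂ν ∂μ ≤
      ENNReal.ofReal (2 ^ (s / 2) * A₀) * (wnorm s μ * wnorm 0 ν + wnorm 0 μ * wnorm s ν) := by
  set c := ENNReal.ofReal (2 ^ (s / 2) * A₀)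
  set W : EuclideanSpace ℝ (Fin N) → ℝ≥0∞ := fun v ↦ ENNReal.ofReal ((1 + ‖v‖ ^ 2) ^ (s / 2))
  have hW : Measurable W := by fun_prop
  have hF' : ∀ v w, F v w ≤ c * (W v + W w) := fun v w ↦ (hF v w).trans_eq <| by
    simp only [c, W]
    rw [ENNReal.ofReal_mul (by positivity), ENNReal.ofReal_mul (by positivity),
      ENNReal.ofReal_add (by positivity) (by positivity)]
    ring
  calc ∫⁻ v, ∫⁻ w, F v w ∂ν ∂μ ≤ ∫⁻ v, ∫⁻ w, c * (W v + W w) ∂ν ∂μ :=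
        lintegral_mono fun v ↦ lintegral_mono (hF' v)
    _ = ∫⁻ v, c * (W v * ν Set.univ + wnorm s ν) ∂μ := by
        simp_rw [lintegral_const_mul' c _ ENNReal.ofReal_ne_top,
          lintegral_add_left measurable_const, lintegral_const]
        rfl
    _ = c * (wnorm s μ * wnorm 0 ν + wnorm 0 μ * wnorm s ν) := by
        rw [lintegral_const_mul' c _ ENNReal.ofReal_ne_top, lintegral_add_right _ measurable_const,
          lintegral_const, lintegral_mul_const _ hW, wnorm_zero, wnorm_zero, mul_comm (wnorm s ν)]
        rfl

lemma lintegral_kernel_mul_le {N : ℕ} {γ A₀ : ℝ} {b : ℝ → ℝ} {e₁ : EuclideanSpace ℝ (Fin N)}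
    {B : EuclideanSpace ℝ (Fin N) → EuclideanSpace ℝ (Fin N) → ℝ} (hb0 : ∀ x, 0 ≤ b x)
    (hA0 : ∀ e : EuclideanSpace ℝ (Fin N), ‖e‖ = 1 →
      ∫⁻ σ, ENNReal.ofReal (b ⟪e, (σ : EuclideanSpace ℝ (Fin N))⟫) ∂(sphereMeasure N)
        = ENNReal.ofReal A₀)
    (he₁ : ‖e₁‖ = 1)
    (hBb : ∀ z σ : EuclideanSpace ℝ (Fin N), ‖σ‖ = 1 →
      B z σ ≤ (1 + ‖z‖ ^ 2) ^ (γ / 2) * b ⟪if z = 0 then e₁ else ‖z‖⁻¹ • z, σ⟫)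
    (z : EuclideanSpace ℝ (Fin N)) {g : sphere (0 : EuclideanSpace ℝ (Fin N)) 1 → ℝ} {C : ℝ}
    (hg : ∀ σ, 0 ≤ g σ) (hC : ∀ σ, (1 + ‖z‖ ^ 2) ^ (γ / 2) * g σ ≤ C) :
    ∫⁻ σ, ENNReal.ofReal (B z σ * g σ) ∂(sphereMeasure N) ≤
      ENNReal.ofReal C * ENNReal.ofReal A₀ := by
  set e : EuclideanSpace ℝ (Fin N) := if z = 0 then e₁ else ‖z‖⁻¹ • z
  have he : ‖e‖ = 1 := by
    by_cases hz : z = 0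
    · simpa [e, hz] using he₁
    · simp [e, hz, norm_smul, norm_ne_zero_iff.mpr hz]
  calc ∫⁻ σ, ENNReal.ofReal (B z σ * g σ) ∂(sphereMeasure N)
      ≤ ∫⁻ σ, ENNReal.ofReal C * ENNReal.ofReal (b ⟪e, (σ : EuclideanSpace ℝ (Fin N))⟫)
          ∂(sphereMeasure N) := lintegral_mono fun σ ↦ ?_
    _ = ENNReal.ofReal C * ENNReal.ofReal A₀ := by
        rw [lintegral_const_mul' _ _ ENNReal.ofReal_ne_top, hA0 e he]
  have hC0 : 0 ≤ C := (mul_nonneg (by positivity) (hg σ)).trans (hC σ)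
  rw [← ENNReal.ofReal_mul hC0]
  refine ENNReal.ofReal_le_ofReal ?_
  calc B z σ * g σ ≤ (1 + ‖z‖ ^ 2) ^ (γ / 2) * b ⟪e, (σ : EuclideanSpace ℝ (Fin N))⟫ * g σ :=
        mul_le_mul_of_nonneg_right (hBb z σ (mem_sphere_zero_iff_norm.mp σ.2)) (hg σ)
    _ = (1 + ‖z‖ ^ 2) ^ (γ / 2) * g σ * b ⟪e, (σ : EuclideanSpace ℝ (Fin N))⟫ := by ring
    _ ≤ C * b ⟪e, (σ : EuclideanSpace ℝ (Fin N))⟫ := mul_le_mul_of_nonneg_right (hC σ) (hb0 _)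

lemma one_add_sq_rpow_mul_abs_le {N : ℕ} {s γ : ℝ} (hs : 0 ≤ s) (hγ : 0 ≤ γ) (hγ2 : γ ≤ 2)
    {ψ : EuclideanSpace ℝ (Fin N) → ℝ} (hψ : ∀ v, |ψ v| ≤ (1 + ‖v‖ ^ 2) ^ (s / 2))
    ⦃v w u : EuclideanSpace ℝ (Fin N)⦄ (hu : ‖u‖ ^ 2 ≤ ‖v‖ ^ 2 + ‖w‖ ^ 2) :
    (1 + ‖v - w‖ ^ 2) ^ (γ / 2) * |ψ u| ≤
      2 ^ ((s + γ) / 2) * ((1 + ‖v‖ ^ 2) ^ ((s + γ) / 2) + (1 + ‖w‖ ^ 2) ^ ((s + γ) / 2)) :=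
  calc (1 + ‖v - w‖ ^ 2) ^ (γ / 2) * |ψ u|
      ≤ (1 + ‖v - w‖ ^ 2) ^ (γ / 2) * (1 + ‖u‖ ^ 2) ^ (s / 2) :=
        mul_le_mul_of_nonneg_left (hψ u) (by positivity)
    _ ≤ _ := rpow_mul_rpow_le_two_rpow_mul_add (by positivity) (by positivity) hs hγ hγ2
        (by positivity) (by nlinarith [norm_sub_sq_le_two_mul v w]) (by positivity) (by linarith)

theorem collision_kernel_moment_bounds_general (N : ℕ)
    (γ s : ℝ) (hγ0 : 0 < γ) (hγ2 : γ ≤ 2) (hs : 0 ≤ s)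
    (b : ℝ → ℝ) (hb0 : ∀ x, 0 ≤ b x)
    (A₀ : ℝ)
    (hA0 : ∀ e : EuclideanSpace ℝ (Fin N), ‖e‖ = 1 →
      ∫⁻ σ, ENNReal.ofReal (b ⟪e, (σ : EuclideanSpace ℝ (Fin N))⟫) ∂(sphereMeasure N)
        = ENNReal.ofReal A₀)
    (e₁ : EuclideanSpace ℝ (Fin N)) (he₁ : ‖e₁‖ = 1)
    (B : EuclideanSpace ℝ (Fin N) → EuclideanSpace ℝ (Fin N) → ℝ)
    (hBb : ∀ z σ : EuclideanSpace ℝ (Fin N), ‖σ‖ = 1 →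
      B z σ ≤ (1 + ‖z‖ ^ 2) ^ (γ / 2) * b ⟪if z = 0 then e₁ else ‖z‖⁻¹ • z, σ⟫)
    (μ ν : Measure (EuclideanSpace ℝ (Fin N)))
    (ψ : EuclideanSpace ℝ (Fin N) → ℝ)
    (hψ : ∀ v, |ψ v| ≤ (1 + ‖v‖ ^ 2) ^ (s / 2)) :
    (∫⁻ v, ∫⁻ w, (∫⁻ σ, ENNReal.ofReal
          (B (v - w) (σ : EuclideanSpace ℝ (Fin N)) * |ψ (vprime v w σ)|)
          ∂(sphereMeasure N)) ∂ν ∂μ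
        ≤ ENNReal.ofReal (2 ^ ((s + γ) / 2) * A₀) *
            (wnorm (s + γ) μ * wnorm 0 ν + wnorm 0 μ * wnorm (s + γ) ν))
    ∧ (∫⁻ v, ∫⁻ w, (∫⁻ σ, ENNReal.ofReal
          (B (v - w) (σ : EuclideanSpace ℝ (Fin N))) ∂(sphereMeasure N)) *
          ENNReal.ofReal |ψ v| ∂ν ∂μ
        ≤ ENNReal.ofReal (2 ^ ((s + γ) / 2) * A₀) *
            (wnorm (s + γ) μ * wnorm 0 ν + wnorm 0 μ * wnorm (s + γ) ν)) := by
  have hK := lintegral_kernel_mul_le hb0 hA0 he₁ hBb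
  have hweight := one_add_sq_rpow_mul_abs_le hs hγ0.le hγ2 hψ
  refine ⟨lintegral_lintegral_le_wnorm fun v w ↦ ?_, lintegral_lintegral_le_wnorm fun v w ↦ ?_⟩
  · exact hK (v - w) (fun _ ↦ abs_nonneg _) fun σ ↦ hweight (norm_vprime_sq_le v w σ)
  · rw [← lintegral_mul_const' _ _ ENNReal.ofReal_ne_top]
    simp_rw [← ENNReal.ofReal_mul' (abs_nonneg (ψ v))]
    exact hK (v - w) (g := fun _ ↦ |ψ v|) (fun _ ↦ abs_nonneg _) fun _ ↦
      hweight (le_add_of_nonneg_right (sq_nonneg _))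

/-- **part of Proposition 1.4.** Bilinear moment bounds on the gain and loss
parts of the collision operator: for `B(z,σ) ≤ (1+|z|²)^{γ/2} b((z/|z|)·σ)` with
`A₀ = ∫_{S^{N-1}} b(e·σ) dσ < ∞` and `|ψ(v)| ≤ ⟨v⟩^s`,
`∬ (∫ B(v-v_*,σ)|ψ(v')| dσ) dμ dν` and `∬ A(v-v_*)|ψ(v)| dμ dν` are both bounded by
`2^{(s+γ)/2} A₀ (‖μ‖_{s+γ}‖ν‖₀ + ‖μ‖₀‖ν‖_{s+γ})`. -/
theorem collision_kernel_moment_bounds (N : ℕ) (hN : 2 ≤ N)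
    (γ s : ℝ) (hγ0 : 0 < γ) (hγ2 : γ ≤ 2) (hs : 0 ≤ s)
    (b : ℝ → ℝ) (hbm : Measurable b) (hb0 : ∀ x, 0 ≤ b x)
    (A₀ : ℝ) (hA₀ : 0 ≤ A₀)
    (hA0 : ∀ e : EuclideanSpace ℝ (Fin N), ‖e‖ = 1 →
      ∫⁻ σ, ENNReal.ofReal (b ⟪e, (σ : EuclideanSpace ℝ (Fin N))⟫) ∂(sphereMeasure N)
        = ENNReal.ofReal A₀)
    (e₁ : EuclideanSpace ℝ (Fin N)) (he₁ : ‖e₁‖ = 1)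
    (B : EuclideanSpace ℝ (Fin N) → EuclideanSpace ℝ (Fin N) → ℝ)
    (hBm : Measurable (Function.uncurry B)) (hB0 : ∀ z σ, 0 ≤ B z σ)
    (hBb : ∀ z σ : EuclideanSpace ℝ (Fin N), ‖σ‖ = 1 →
      B z σ ≤ (1 + ‖z‖ ^ 2) ^ (γ / 2) * b ⟪if z = 0 then e₁ else ‖z‖⁻¹ • z, σ⟫)
    (μ ν : Measure (EuclideanSpace ℝ (Fin N)))
    (hμ : wnorm (s + γ) μ < ⊤) (hν : wnorm (s + γ) ν < ⊤)
    (ψ : EuclideanSpace ℝ (Fin N) → ℝ) (hψm : Measurable ψ)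
    (hψ : ∀ v, |ψ v| ≤ (1 + ‖v‖ ^ 2) ^ (s / 2)) :
    (∫⁻ v, ∫⁻ w, (∫⁻ σ, ENNReal.ofReal
          (B (v - w) (σ : EuclideanSpace ℝ (Fin N)) * |ψ (vprime v w σ)|)
          ∂(sphereMeasure N)) ∂ν ∂μ
        ≤ ENNReal.ofReal (2 ^ ((s + γ) / 2) * A₀) *
            (wnorm (s + γ) μ * wnorm 0 ν + wnorm 0 μ * wnorm (s + γ) ν))
    ∧ (∫⁻ v, ∫⁻ w, (∫⁻ σ, ENNReal.ofReal
          (B (v - w) (σ : EuclideanSpace ℝ (Fin N))) ∂(sphereMeasure N)) *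
          ENNReal.ofReal |ψ v| ∂ν ∂μ
        ≤ ENNReal.ofReal (2 ^ ((s + γ) / 2) * A₀) *
            (wnorm (s + γ) μ * wnorm 0 ν + wnorm 0 μ * wnorm (s + γ) ν)) :=
  collision_kernel_moment_bounds_general N γ s hγ0 hγ2 hs b hb0 A₀ hA0 e₁ he₁ B hBb μ ν ψ hψ
end

section
/- Let N ≥ 2 be an integer, 0 < γ ≤ 2, s ≥ 0, let b : [−1,1] → [0,∞) be measurable with A₀ := ∫_{S^{N−1}} b(e·σ) dσ < ∞ (independent of the unit vector e), and let B : ℝ^N × S^{N−1} → [0,∞) be measurable with B(z,σ) ≤ (1+|z|²)^{γ/2} b((z/|z|)·σ) for all z ≠ 0 and all σ (with z/|z| replaced by a fixed unit vector when z = 0); set A(z) := ∫_{S^{N−1}} B(z,σ) dσ. Then for all μ, ν ∈ B_{s+γ}⁺(ℝ^N) and every Borel function ψ : ℝ^N → ℝ with |ψ(v)| ≤ ⟨v⟩^s for all v, one has | ∬_{ℝ^N×ℝ^N} (∫_{S^{N−1}} B(v−v_*,σ) ψ(v') dσ) d(μ⊗μ)(v,v_*) − ∬_{ℝ^N×ℝ^N}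 (∫_{S^{N−1}} B(v−v_*,σ) ψ(v') dσ) d(ν⊗ν)(v,v_*) | ≤ 2^{(s+γ)/2} A₀ (‖μ+ν‖_{s+γ}‖μ−ν‖₀ + ‖μ+ν‖₀‖μ−ν‖_{s+γ}), and the same bound holds with the inner integrand ∫_{S^{N−1}} B(v−v_*,σ) ψ(v') dσ replaced by A(v−v_*) ψ(v). -/
open Real MeasureTheory Metric Classical
open scoped ENNReal NNReal RealInnerProductSpace

/-- The weighted norm `‖μ‖ₛ = ∫ ⟨v⟩^s dμ`, as a real number (via `toReal`). -/
noncomputable def rnorm {N : ℕ} (s : ℝ) (μ : Measure (EuclideanSpace ℝ (Fin N))) : ℝ :=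
  (∫⁻ v, ENNReal.ofReal ((1 + ‖v‖ ^ 2) ^ (s / 2)) ∂μ).toReal

/-- The weighted total variation norm `‖μ-ν‖ₛ = ∫ ⟨v⟩^s d|μ-ν|` of the difference of two
finite positive measures, as a real number. -/
noncomputable def tvnorm {N : ℕ} (s : ℝ) (μ ν : Measure (EuclideanSpace ℝ (Fin N)))
    [IsFiniteMeasure μ] [IsFiniteMeasure ν] : ℝ :=
  (∫⁻ v, ENNReal.ofReal ((1 + ‖v‖ ^ 2) ^ (s / 2))
    ∂((μ.toSignedMeasure - ν.toSignedMeasure).totalVariation)).toReal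

/-!
Both kernels are dominated by `A₀ ⟨v - v_*⟩^γ (1 + |v|² + |v_*|²)^{s/2}`: the angular bound on `B`
gives `∫ B(z, σ) dσ ≤ ⟨z⟩^γ A₀`, and `|v'|² ≤ |v|² + |v_*|²`. Since `⟨v - v_*⟩² ≤ 2 (1 + |v|² + |v_*|²)`
and `γ ≤ 2`, this is at most `2^{(s+γ)/2} A₀ (⟨v⟩^{s+γ} + ⟨v_*⟩^{s+γ})`.

For a kernel `|K(v, v_*)| ≤ C (w(v) + w(v_*))` one has
`∫ |K| d(α ⊗ β) ≤ C (‖α‖_w ‖β‖₀ + ‖α‖₀ ‖β‖_w)`. Writing `μ - ν = p - n` with `p ≤ μ`, `n ≤ ν` and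
`|μ - ν| = p + n`, we get `μ ⊗ μ - ν ⊗ ν = μ ⊗ (p - n) + (p - n) ⊗ ν`, and bounding both terms by
`μ ⊗ |μ - ν|` and `|μ - ν| ⊗ ν` yields the estimate.
-/

namespace Boltzmann

section ProductMeasure

variable {α : Type*} [MeasurableSpace α]

lemma enorm_integral_sub_le_lintegral_add_measure {E : Type*} [NormedAddCommGroup E]
    [NormedSpace ℝ E] (f : α → E) (ρ₁ ρ₂ : Measure α) :
    ‖∫ x, f x ∂ρ₁ - ∫ x, f x ∂ρ₂‖ₑ ≤ ∫⁻ x, ‖f x‖ₑ ∂(ρ₁ + ρ₂) := by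
  rw [lintegral_add_measure]
  exact enorm_sub_le.trans
    (add_le_add (enorm_integral_le_lintegral_enorm f) (enorm_integral_le_lintegral_enorm f))

lemma Measure.add_sub_eq_add_sub (μ ν : Measure α) [IsFiniteMeasure μ] [IsFiniteMeasure ν] :
    μ + (ν - μ) = ν + (μ - ν) := by
  have h := Measure.sub_toSignedMeasure_eq_toSignedMeasure_sub (μ := μ) (ν := ν)
  rw [sub_eq_sub_iff_add_eq_add] at h
  rw [← Measure.toSignedMeasure_eq_toSignedMeasure_iff, Measure.toSignedMeasure_add,
    Measure.toSignedMeasure_add]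
  linear_combination (norm := abel) h

lemma totalVariation_toSignedMeasure_sub (μ ν : Measure α) [IsFiniteMeasure μ]
    [IsFiniteMeasure ν] :
    (μ.toSignedMeasure - ν.toSignedMeasure).totalVariation = (μ - ν) + (ν - μ) := by
  rw [SignedMeasure.totalVariation, Measure.toJordanDecomposition_toSignedMeasure_sub]
  rfl

lemma totalVariation_toSignedMeasure_sub_le (μ ν : Measure α) [IsFiniteMeasure μ]
    [IsFiniteMeasure ν] :
    (μ.toSignedMeasure - ν.toSignedMeasure).totalVariation ≤ μ + ν := by
  rw [totalVariation_toSignedMeasure_sub]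
  exact add_le_add Measure.sub_le Measure.sub_le

variable {W : α → ℝ≥0∞} {c : ℝ≥0∞} {K : α × α → ℝ}

lemma lintegral_prod_le_of_le_add (hW : Measurable W) {g : α × α → ℝ≥0∞}
    (hg : ∀ x, g x ≤ c * (W x.1 + W x.2)) (μ ν : Measure α) [SFinite μ] [SFinite ν] :
    ∫⁻ x, g x ∂(μ.prod ν) ≤ c * ((∫⁻ v, W v ∂μ) * ν Set.univ + μ Set.univ * ∫⁻ v, W v ∂ν) := by
  have hfst := lintegral_prod_mul (μ := μ) (ν := ν) hW.aemeasurable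
    (aemeasurable_const (b := (1 : ℝ≥0∞)))
  have hsnd := lintegral_prod_mul (μ := μ) (ν := ν) (aemeasurable_const (b := (1 : ℝ≥0∞)))
    hW.aemeasurable
  simp only [mul_one, one_mul, lintegral_one] at hfst hsnd
  calc ∫⁻ x, g x ∂(μ.prod ν) ≤ ∫⁻ x, c * (W x.1 + W x.2) ∂(μ.prod ν) := lintegral_mono hg
    _ = _ := by
      rw [lintegral_const_mul c (f := fun x : α × α => W x.1 + W x.2) (by fun_prop),
        lintegral_add_left (f := fun x : α × α => W x.1) (by fun_prop), hfst, hsnd]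

lemma integrable_prod_of_enorm_le (hW : Measurable W) (hc : c ≠ ∞) (hK : Measurable K)
    (hKW : ∀ x, ‖K x‖ₑ ≤ c * (W x.1 + W x.2)) {μ ν : Measure α} [IsFiniteMeasure μ]
    [IsFiniteMeasure ν] (hμ : ∫⁻ v, W v ∂μ ≠ ∞) (hν : ∫⁻ v, W v ∂ν ≠ ∞) :
    Integrable K (μ.prod ν) :=
  ⟨hK.aestronglyMeasurable, (lintegral_prod_le_of_le_add hW hKW μ ν).trans_lt (by finiteness)⟩

theorem enorm_integral_prod_self_sub_le (hW : Measurable W) (hc : c ≠ ∞) (hK : Measurable K)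
    (hKW : ∀ x, ‖K x‖ₑ ≤ c * (W x.1 + W x.2)) (μ ν : Measure α) [IsFiniteMeasure μ]
    [IsFiniteMeasure ν] (hμ : ∫⁻ v, W v ∂μ ≠ ∞) (hν : ∫⁻ v, W v ∂ν ≠ ∞) :
    ‖∫ x, K x ∂(μ.prod μ) - ∫ x, K x ∂(ν.prod ν)‖ₑ
      ≤ c * ((∫⁻ v, W v ∂(μ + ν)) * (μ.toSignedMeasure - ν.toSignedMeasure).totalVariation Set.univ
        + (μ + ν) Set.univ * ∫⁻ v, W v ∂(μ.toSignedMeasure - ν.toSignedMeasure).totalVariation) := by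
  -- Measure subtraction truncates: `p` and `n` are the positive and negative parts of `μ - ν`.
  set p := μ - ν
  set n := ν - μ
  have hp : ∫⁻ v, W v ∂p ≠ ∞ := ne_top_of_le_ne_top hμ (lintegral_mono' Measure.sub_le le_rfl)
  have hn : ∫⁻ v, W v ∂n ≠ ∞ := ne_top_of_le_ne_top hν (lintegral_mono' Measure.sub_le le_rfl)
  have hint {ρ₁ ρ₂ : Measure α} [IsFiniteMeasure ρ₁] [IsFiniteMeasure ρ₂]
      (h₁ : ∫⁻ v, W v ∂ρ₁ ≠ ∞) (h₂ : ∫⁻ v, W v ∂ρ₂ ≠ ∞) : Integrable K (ρ₁.prod ρ₂) :=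
    integrable_prod_of_enorm_le hW hc hK hKW h₁ h₂
  have hleft : ∫ x, K x ∂(μ.prod μ) + ∫ x, K x ∂(μ.prod n)
      = ∫ x, K x ∂(μ.prod ν) + ∫ x, K x ∂(μ.prod p) := by
    rw [← integral_add_measure (hint hμ hμ) (hint hμ hn),
      ← integral_add_measure (hint hμ hν) (hint hμ hp), ← Measure.prod_add, ← Measure.prod_add,
      Measure.add_sub_eq_add_sub]
  have hright : ∫ x, K x ∂(μ.prod ν) + ∫ x, K x ∂(n.prod ν)
      = ∫ x, K x ∂(ν.prod ν) + ∫ x, K x ∂(p.prod ν) := by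
    rw [← integral_add_measure (hint hμ hν) (hint hn hν),
      ← integral_add_measure (hint hν hν) (hint hp hν), ← Measure.add_prod, ← Measure.add_prod,
      Measure.add_sub_eq_add_sub]
  have hsplit : ∫ x, K x ∂(μ.prod μ) - ∫ x, K x ∂(ν.prod ν)
      = (∫ x, K x ∂(μ.prod p) - ∫ x, K x ∂(μ.prod n))
        + (∫ x, K x ∂(p.prod ν) - ∫ x, K x ∂(n.prod ν)) := by
    linarith
  rw [hsplit, totalVariation_toSignedMeasure_sub]
  calc _ ≤ ‖∫ x, K x ∂(μ.prod p) - ∫ x, K x ∂(μ.prod n)‖ₑ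
        + ‖∫ x, K x ∂(p.prod ν) - ∫ x, K x ∂(n.prod ν)‖ₑ := enorm_add_le _ _
    _ ≤ ∫⁻ x, ‖K x‖ₑ ∂(μ.prod (p + n)) + ∫⁻ x, ‖K x‖ₑ ∂((p + n).prod ν) := by
      rw [Measure.prod_add, Measure.add_prod]
      exact add_le_add (enorm_integral_sub_le_lintegral_add_measure _ _ _)
        (enorm_integral_sub_le_lintegral_add_measure _ _ _)
    _ ≤ c * ((∫⁻ v, W v ∂μ) * (p + n) Set.univ + μ Set.univ * ∫⁻ v, W v ∂(p + n))
        + c * ((∫⁻ v, W v ∂(p + n)) * ν Set.univ + (p + n) Set.univ * ∫⁻ v, W v ∂ν) :=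
      add_le_add (lintegral_prod_le_of_le_add hW hKW _ _)
        (lintegral_prod_le_of_le_add hW hKW _ _)
    _ = _ := by
      simp only [lintegral_add_measure, Measure.add_apply]
      ring

lemma abs_integral_mul_le_of_lintegral_le {ρ : Measure α} {f g : α → ℝ} {M a : ℝ}
    (hf : ∀ x, 0 ≤ f x) (hM : 0 ≤ M) (hg : ∀ x, |g x| ≤ M) (ha : 0 ≤ a)
    (hfa : ∫⁻ x, ENNReal.ofReal (f x) ∂ρ ≤ ENNReal.ofReal a) :
    |∫ x, f x * g x ∂ρ| ≤ M * a := by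
  rw [← ENNReal.ofReal_le_ofReal_iff (by positivity), ← enorm_eq_ofReal_abs,
    ENNReal.ofReal_mul hM]
  calc ‖∫ x, f x * g x ∂ρ‖ₑ ≤ ∫⁻ x, ‖f x * g x‖ₑ ∂ρ := enorm_integral_le_lintegral_enorm _
    _ ≤ ∫⁻ x, ENNReal.ofReal M * ENNReal.ofReal (f x) ∂ρ := lintegral_mono fun x => by
        rw [enorm_eq_ofReal_abs, ← ENNReal.ofReal_mul hM, abs_mul, abs_of_nonneg (hf x)]
        exact ENNReal.ofReal_le_ofReal (by nlinarith [hg x, hf x])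
    _ = ENNReal.ofReal M * ∫⁻ x, ENNReal.ofReal (f x) ∂ρ :=
        lintegral_const_mul' _ _ ENNReal.ofReal_ne_top
    _ ≤ ENNReal.ofReal M * ENNReal.ofReal a := by gcongr

end ProductMeasure

section Weight

variable {E : Type*} [SeminormedAddCommGroup E]

noncomputable def weight (t : ℝ) (v : E) : ℝ := (1 + ‖v‖ ^ 2) ^ (t / 2)

lemma weight_nonneg (t : ℝ) (v : E) : 0 ≤ weight t v := by
  unfold weight; positivity

lemma measurable_weight [MeasurableSpace E] [OpensMeasurableSpace E] (t : ℝ) :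
    Measurable (weight t : E → ℝ) := by
  unfold weight; fun_prop

lemma two_rpow_mul_rpow_add_le {x y q r : ℝ} (hx : 0 ≤ x) (hy : 0 ≤ y) (hq : 0 ≤ q)
    (hr1 : r ≤ 1) (hrq : r ≤ q) :
    2 ^ r * (x + y) ^ q ≤ 2 ^ q * (x ^ q + y ^ q) := by
  rcases le_total q 1 with hq1 | hq1
  · exact mul_le_mul (rpow_le_rpow_of_exponent_le one_le_two hrq)
      (rpow_add_le_add_rpow hx hy hq hq1) (by positivity) (by positivity)
  · have hconv : (x + y) ^ q ≤ 2 ^ (q - 1) * (x ^ q + y ^ q) := by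
      lift x to ℝ≥0 using hx
      lift y to ℝ≥0 using hy
      exact_mod_cast NNReal.rpow_add_le_mul_rpow_add_rpow x y hq1
    calc 2 ^ r * (x + y) ^ q ≤ 2 ^ r * (2 ^ (q - 1) * (x ^ q + y ^ q)) := by gcongr
      _ = 2 ^ (r + (q - 1)) * (x ^ q + y ^ q) := by
        rw [rpow_add two_pos, mul_assoc]
      _ ≤ 2 ^ q * (x ^ q + y ^ q) := by
        gcongr
        · exact one_le_two
        · linarith

lemma weight_sub_mul_le {γ s : ℝ} (hγ0 : 0 ≤ γ) (hγ2 : γ ≤ 2) (hs : 0 ≤ s)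
    (v w : E) :
    weight γ (v - w) * (1 + ‖v‖ ^ 2 + ‖w‖ ^ 2) ^ (s / 2)
      ≤ 2 ^ ((s + γ) / 2) * (weight (s + γ) v + weight (s + γ) w) := by
  set D := 1 + ‖v‖ ^ 2 + ‖w‖ ^ 2
  have hD : 0 < D := by positivity
  have hsub : 1 + ‖v - w‖ ^ 2 ≤ 2 * D := by
    nlinarith [norm_sub_le v w, norm_nonneg (v - w), sq_nonneg (‖v‖ - ‖w‖)]
  calc (1 + ‖v - w‖ ^ 2) ^ (γ / 2) * D ^ (s / 2) ≤ (2 * D) ^ (γ / 2) * D ^ (s / 2) := by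
        gcongr
    _ = 2 ^ (γ / 2) * D ^ ((s + γ) / 2) := by
        rw [mul_rpow zero_le_two hD.le, mul_assoc, ← rpow_add hD]
        ring_nf
    _ ≤ 2 ^ (γ / 2) * ((1 + ‖v‖ ^ 2) + (1 + ‖w‖ ^ 2)) ^ ((s + γ) / 2) := by
        gcongr
        linarith
    _ ≤ 2 ^ ((s + γ) / 2) * (weight (s + γ) v + weight (s + γ) w) :=
        two_rpow_mul_rpow_add_le (by positivity) (by positivity) (by linarith) (by linarith)
          (by linarith)

end Weight

section Euclidean

variable {N : ℕ}

lemma rnorm_zero (ρ : Measure (EuclideanSpace ℝ (Fin N))) : rnorm 0 ρ = (ρ Set.univ).toReal := by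
  simp [rnorm]

lemma tvnorm_zero (μ ν : Measure (EuclideanSpace ℝ (Fin N))) [IsFiniteMeasure μ]
    [IsFiniteMeasure ν] :
    tvnorm 0 μ ν = ((μ.toSignedMeasure - ν.toSignedMeasure).totalVariation Set.univ).toReal := by
  simp [tvnorm]

theorem abs_integral_prod_self_sub_le {t C : ℝ} (hC : 0 ≤ C)
    {K : EuclideanSpace ℝ (Fin N) × EuclideanSpace ℝ (Fin N) → ℝ} (hK : Measurable K)
    (hKw : ∀ x, |K x| ≤ C * (weight t x.1 + weight t x.2))
    (μ ν : Measure (EuclideanSpace ℝ (Fin N))) [IsFiniteMeasure μ] [IsFiniteMeasure ν]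
    (hμ : ∫⁻ v, ENNReal.ofReal (weight t v) ∂μ ≠ ∞)
    (hν : ∫⁻ v, ENNReal.ofReal (weight t v) ∂ν ≠ ∞) :
    |∫ x, K x ∂(μ.prod μ) - ∫ x, K x ∂(ν.prod ν)|
      ≤ C * (rnorm t (μ + ν) * tvnorm 0 μ ν + rnorm 0 (μ + ν) * tvnorm t μ ν) := by
  have hKW (x) : ‖K x‖ₑ ≤ ENNReal.ofReal C
      * (ENNReal.ofReal (weight t x.1) + ENNReal.ofReal (weight t x.2)) := by
    rw [enorm_eq_ofReal_abs, ← ENNReal.ofReal_add (weight_nonneg _ _) (weight_nonneg _ _),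
      ← ENNReal.ofReal_mul hC]
    exact ENNReal.ofReal_le_ofReal (hKw x)
  have h := enorm_integral_prod_self_sub_le (measurable_weight t).ennreal_ofReal
    ENNReal.ofReal_ne_top hK hKW μ ν hμ hν
  have hμν : ∫⁻ v, ENNReal.ofReal (weight t v) ∂(μ + ν) ≠ ∞ := by
    rw [lintegral_add_measure]; finiteness
  have hτ : ∫⁻ v, ENNReal.ofReal (weight t v)
      ∂(μ.toSignedMeasure - ν.toSignedMeasure).totalVariation ≠ ∞ :=
    ne_top_of_le_ne_top hμν (lintegral_mono' (totalVariation_toSignedMeasure_sub_le μ ν) le_rfl)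
  calc |∫ x, K x ∂(μ.prod μ) - ∫ x, K x ∂(ν.prod ν)|
      = (‖∫ x, K x ∂(μ.prod μ) - ∫ x, K x ∂(ν.prod ν)‖ₑ).toReal := by
        rw [enorm_eq_ofReal_abs, ENNReal.toReal_ofReal (abs_nonneg _)]
    _ ≤ _ := ENNReal.toReal_mono (by finiteness) h
    _ = _ := by
        rw [ENNReal.toReal_mul, ENNReal.toReal_ofReal hC,
          ENNReal.toReal_add (by finiteness) (by finiteness), ENNReal.toReal_mul,
          ENNReal.toReal_mul, rnorm_zero, tvnorm_zero]
        rfl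

instance isFiniteMeasure_sphereMeasure : IsFiniteMeasure (sphereMeasure N) := by
  unfold sphereMeasure; infer_instance

variable {γ s A₀ : ℝ} {B : EuclideanSpace ℝ (Fin N) → EuclideanSpace ℝ (Fin N) → ℝ}
  {ψ : EuclideanSpace ℝ (Fin N) → ℝ}

lemma lintegral_ofReal_kernel_le {b : ℝ → ℝ}
    (hA0 : ∀ e : EuclideanSpace ℝ (Fin N), ‖e‖ = 1 →
      ∫⁻ σ, ENNReal.ofReal (b ⟪e, (σ : EuclideanSpace ℝ (Fin N))⟫) ∂(sphereMeasure N)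
        = ENNReal.ofReal A₀)
    {e₁ : EuclideanSpace ℝ (Fin N)} (he₁ : ‖e₁‖ = 1)
    (hBb : ∀ z σ : EuclideanSpace ℝ (Fin N), ‖σ‖ = 1 →
      B z σ ≤ (1 + ‖z‖ ^ 2) ^ (γ / 2) * b ⟪if z = 0 then e₁ else ‖z‖⁻¹ • z, σ⟫)
    (z : EuclideanSpace ℝ (Fin N)) :
    ∫⁻ σ, ENNReal.ofReal (B z σ) ∂(sphereMeasure N) ≤ ENNReal.ofReal (weight γ z * A₀) := by
  set e : EuclideanSpace ℝ (Fin N) := if z = 0 then e₁ else ‖z‖⁻¹ • z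
  have he : ‖e‖ = 1 := by
    by_cases hz : z = 0
    · simp [e, hz, he₁]
    · simp only [e, if_neg hz]
      exact norm_smul_inv_norm hz
  calc ∫⁻ σ, ENNReal.ofReal (B z σ) ∂(sphereMeasure N)
      ≤ ∫⁻ σ, ENNReal.ofReal (weight γ z)
          * ENNReal.ofReal (b ⟪e, (σ : EuclideanSpace ℝ (Fin N))⟫) ∂(sphereMeasure N) :=
        lintegral_mono fun σ => by
          rw [← ENNReal.ofReal_mul (weight_nonneg _ _)]
          exact ENNReal.ofReal_le_ofReal (hBb z σ (norm_eq_of_mem_sphere σ))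
    _ = ENNReal.ofReal (weight γ z * A₀) := by
        rw [lintegral_const_mul' _ _ ENNReal.ofReal_ne_top, hA0 e he,
          ENNReal.ofReal_mul (weight_nonneg _ _)]

lemma norm_vprime_sq_le (v w : EuclideanSpace ℝ (Fin N))
    (σ : sphere (0 : EuclideanSpace ℝ (Fin N)) 1) :
    ‖vprime v w σ‖ ^ 2 ≤ ‖v‖ ^ 2 + ‖w‖ ^ 2 := by
  have h : ‖vprime v w σ‖ ≤ ‖v + w‖ / 2 + ‖v - w‖ / 2 := by
    refine (norm_add_le _ _).trans_eq ?_
    rw [norm_smul, norm_smul, norm_eq_of_mem_sphere σ, Real.norm_of_nonneg (by positivity),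
      Real.norm_of_nonneg (by positivity)]
    ring
  have hpar := parallelogram_law_with_norm ℝ v w
  nlinarith [norm_nonneg (vprime v w σ), norm_nonneg (v + w), norm_nonneg (v - w),
    sq_nonneg (‖v + w‖ - ‖v - w‖)]

lemma abs_integral_kernel_mul_vprime_le (hs : 0 ≤ s) (hA₀ : 0 ≤ A₀) (hB0 : ∀ z σ, 0 ≤ B z σ)
    (hBA : ∀ z, ∫⁻ σ, ENNReal.ofReal (B z σ) ∂(sphereMeasure N)
      ≤ ENNReal.ofReal (weight γ z * A₀))
    (hψ : ∀ v, |ψ v| ≤ weight s v) (v w : EuclideanSpace ℝ (Fin N)) :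
    |∫ σ, B (v - w) σ * ψ (vprime v w σ) ∂(sphereMeasure N)|
      ≤ (1 + ‖v‖ ^ 2 + ‖w‖ ^ 2) ^ (s / 2) * (weight γ (v - w) * A₀) :=
  abs_integral_mul_le_of_lintegral_le (fun σ => hB0 _ _) (by positivity)
    (fun σ => (hψ _).trans
      (rpow_le_rpow (by positivity) (by linarith [norm_vprime_sq_le v w σ]) (by linarith)))
    (mul_nonneg (weight_nonneg _ _) hA₀) (hBA _)

lemma abs_integral_kernel_mul_le (hs : 0 ≤ s) (hA₀ : 0 ≤ A₀) (hB0 : ∀ z σ, 0 ≤ B z σ)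
    (hBA : ∀ z, ∫⁻ σ, ENNReal.ofReal (B z σ) ∂(sphereMeasure N)
      ≤ ENNReal.ofReal (weight γ z * A₀))
    (hψ : ∀ v, |ψ v| ≤ weight s v) (v w : EuclideanSpace ℝ (Fin N)) :
    |(∫ σ, B (v - w) σ ∂(sphereMeasure N)) * ψ v|
      ≤ (1 + ‖v‖ ^ 2 + ‖w‖ ^ 2) ^ (s / 2) * (weight γ (v - w) * A₀) := by
  have hA : |∫ σ, B (v - w) σ * 1 ∂(sphereMeasure N)| ≤ 1 * (weight γ (v - w) * A₀) :=
    abs_integral_mul_le_of_lintegral_le (fun σ => hB0 _ _) zero_le_one (fun σ => by simp)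
      (mul_nonneg (weight_nonneg _ _) hA₀) (hBA _)
  simp only [mul_one, one_mul] at hA
  rw [abs_mul, mul_comm]
  exact mul_le_mul ((hψ v).trans (rpow_le_rpow (by positivity) (by linarith [sq_nonneg ‖w‖]) (by linarith))) hA
    (abs_nonneg _) (by positivity)

lemma measurable_integral_kernel_mul_vprime (hBm : Measurable (Function.uncurry B))
    (hψm : Measurable ψ) :
    Measurable fun x : EuclideanSpace ℝ (Fin N) × EuclideanSpace ℝ (Fin N) =>
      ∫ σ, B (x.1 - x.2) σ * ψ (vprime x.1 x.2 σ) ∂(sphereMeasure N) := by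
  have hv : Continuous fun q : (EuclideanSpace ℝ (Fin N) × EuclideanSpace ℝ (Fin N)) ×
      sphere (0 : EuclideanSpace ℝ (Fin N)) 1 => vprime q.1.1 q.1.2 q.2 := by
    unfold vprime; fun_prop
  have hB : Measurable fun q : (EuclideanSpace ℝ (Fin N) × EuclideanSpace ℝ (Fin N)) ×
      sphere (0 : EuclideanSpace ℝ (Fin N)) 1 => B (q.1.1 - q.1.2) q.2 :=
    hBm.comp ((measurable_fst.fst.sub measurable_fst.snd).prodMk measurable_snd.subtype_val)
  exact (hB.mul (hψm.comp hv.measurable)).stronglyMeasurable.integral_prod_right'.measurable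

lemma measurable_integral_kernel (hBm : Measurable (Function.uncurry B)) :
    Measurable fun z => ∫ σ, B z σ ∂(sphereMeasure N) :=
  (hBm.comp (measurable_fst.prodMk measurable_snd.subtype_val)).stronglyMeasurable
    |>.integral_prod_right'.measurable

end Euclidean

end Boltzmann

open Boltzmann

theorem collision_operator_difference_bounds_general (N : ℕ)
    (γ s : ℝ) (hγ0 : 0 < γ) (hγ2 : γ ≤ 2) (hs : 0 ≤ s)
    (b : ℝ → ℝ)
    (A₀ : ℝ) (hA₀ : 0 ≤ A₀)
    (hA0 : ∀ e : EuclideanSpace ℝ (Fin N), ‖e‖ = 1 →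
      ∫⁻ σ, ENNReal.ofReal (b ⟪e, (σ : EuclideanSpace ℝ (Fin N))⟫) ∂(sphereMeasure N)
        = ENNReal.ofReal A₀)
    (e₁ : EuclideanSpace ℝ (Fin N)) (he₁ : ‖e₁‖ = 1)
    (B : EuclideanSpace ℝ (Fin N) → EuclideanSpace ℝ (Fin N) → ℝ)
    (hBm : Measurable (Function.uncurry B)) (hB0 : ∀ z σ, 0 ≤ B z σ)
    (hBb : ∀ z σ : EuclideanSpace ℝ (Fin N), ‖σ‖ = 1 →
      B z σ ≤ (1 + ‖z‖ ^ 2) ^ (γ / 2) * b ⟪if z = 0 then e₁ else ‖z‖⁻¹ • z, σ⟫)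
    (μ ν : Measure (EuclideanSpace ℝ (Fin N)))
    [IsFiniteMeasure μ] [IsFiniteMeasure ν]
    (hμ : ∫⁻ v, ENNReal.ofReal ((1 + ‖v‖ ^ 2) ^ ((s + γ) / 2)) ∂μ < ⊤)
    (hν : ∫⁻ v, ENNReal.ofReal ((1 + ‖v‖ ^ 2) ^ ((s + γ) / 2)) ∂ν < ⊤)
    (ψ : EuclideanSpace ℝ (Fin N) → ℝ) (hψm : Measurable ψ)
    (hψ : ∀ v, |ψ v| ≤ (1 + ‖v‖ ^ 2) ^ (s / 2)) :
    (|(∫ x, (∫ σ, B (x.1 - x.2) (σ : EuclideanSpace ℝ (Fin N)) * ψ (vprime x.1 x.2 σ)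
            ∂(sphereMeasure N)) ∂(μ.prod μ))
        - ∫ x, (∫ σ, B (x.1 - x.2) (σ : EuclideanSpace ℝ (Fin N)) * ψ (vprime x.1 x.2 σ)
            ∂(sphereMeasure N)) ∂(ν.prod ν)|
      ≤ 2 ^ ((s + γ) / 2) * A₀ *
          (rnorm (s + γ) (μ + ν) * tvnorm 0 μ ν + rnorm 0 (μ + ν) * tvnorm (s + γ) μ ν))
    ∧ (|(∫ x, (∫ σ, B (x.1 - x.2) (σ : EuclideanSpace ℝ (Fin N)) ∂(sphereMeasure N)) * ψ x.1
            ∂(μ.prod μ))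
        - ∫ x, (∫ σ, B (x.1 - x.2) (σ : EuclideanSpace ℝ (Fin N)) ∂(sphereMeasure N)) * ψ x.1
            ∂(ν.prod ν)|
      ≤ 2 ^ ((s + γ) / 2) * A₀ *
          (rnorm (s + γ) (μ + ν) * tvnorm 0 μ ν + rnorm 0 (μ + ν) * tvnorm (s + γ) μ ν)) := by
  have hBA := lintegral_ofReal_kernel_le hA0 he₁ hBb
  have hweight (x : EuclideanSpace ℝ (Fin N) × EuclideanSpace ℝ (Fin N)) :
      (1 + ‖x.1‖ ^ 2 + ‖x.2‖ ^ 2) ^ (s / 2) * (weight γ (x.1 - x.2) * A₀)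
        ≤ 2 ^ ((s + γ) / 2) * A₀ * (weight (s + γ) x.1 + weight (s + γ) x.2) :=
    calc _ = A₀ * (weight γ (x.1 - x.2) * (1 + ‖x.1‖ ^ 2 + ‖x.2‖ ^ 2) ^ (s / 2)) := by ring
      _ ≤ A₀ * (2 ^ ((s + γ) / 2) * (weight (s + γ) x.1 + weight (s + γ) x.2)) :=
        mul_le_mul_of_nonneg_left (weight_sub_mul_le hγ0.le hγ2 hs x.1 x.2) hA₀
      _ = _ := by ring
  constructor
  · exact abs_integral_prod_self_sub_le (by positivity)
      (measurable_integral_kernel_mul_vprime hBm hψm)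
      (fun x => (abs_integral_kernel_mul_vprime_le hs hA₀ hB0 hBA hψ x.1 x.2).trans (hweight x))
      μ ν hμ.ne hν.ne
  · exact abs_integral_prod_self_sub_le (by positivity)
      (((measurable_integral_kernel hBm).comp measurable_sub).mul (hψm.comp measurable_fst))
      (fun x => (abs_integral_kernel_mul_le hs hA₀ hB0 hBA hψ x.1 x.2).trans (hweight x))
      μ ν hμ.ne hν.ne

/-- **Lipschitz bound of Proposition 1.4.** With the same kernel assumptions as
Statement 3 and `|ψ(v)| ≤ ⟨v⟩^s`,
`|∬ K d(μ⊗μ) - ∬ K d(ν⊗ν)| ≤ 2^{(s+γ)/2} A₀ (‖μ+ν‖_{s+γ}‖μ-ν‖₀ + ‖μ+ν‖₀‖μ-ν‖_{s+γ})`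
both for `K(v,v_*) = ∫_{S^{N-1}} B(v-v_*,σ)ψ(v') dσ` and for `K(v,v_*) = A(v-v_*)ψ(v)`. -/
theorem collision_operator_difference_bounds (N : ℕ) (hN : 2 ≤ N)
    (γ s : ℝ) (hγ0 : 0 < γ) (hγ2 : γ ≤ 2) (hs : 0 ≤ s)
    (b : ℝ → ℝ) (hbm : Measurable b) (hb0 : ∀ x, 0 ≤ b x)
    (A₀ : ℝ) (hA₀ : 0 ≤ A₀)
    (hA0 : ∀ e : EuclideanSpace ℝ (Fin N), ‖e‖ = 1 →
      ∫⁻ σ, ENNReal.ofReal (b ⟪e, (σ : EuclideanSpace ℝ (Fin N))⟫) ∂(sphereMeasure N)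
        = ENNReal.ofReal A₀)
    (e₁ : EuclideanSpace ℝ (Fin N)) (he₁ : ‖e₁‖ = 1)
    (B : EuclideanSpace ℝ (Fin N) → EuclideanSpace ℝ (Fin N) → ℝ)
    (hBm : Measurable (Function.uncurry B)) (hB0 : ∀ z σ, 0 ≤ B z σ)
    (hBb : ∀ z σ : EuclideanSpace ℝ (Fin N), ‖σ‖ = 1 →
      B z σ ≤ (1 + ‖z‖ ^ 2) ^ (γ / 2) * b ⟪if z = 0 then e₁ else ‖z‖⁻¹ • z, σ⟫)
    (μ ν : Measure (EuclideanSpace ℝ (Fin N)))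
    [IsFiniteMeasure μ] [IsFiniteMeasure ν]
    (hμ : ∫⁻ v, ENNReal.ofReal ((1 + ‖v‖ ^ 2) ^ ((s + γ) / 2)) ∂μ < ⊤)
    (hν : ∫⁻ v, ENNReal.ofReal ((1 + ‖v‖ ^ 2) ^ ((s + γ) / 2)) ∂ν < ⊤)
    (ψ : EuclideanSpace ℝ (Fin N) → ℝ) (hψm : Measurable ψ)
    (hψ : ∀ v, |ψ v| ≤ (1 + ‖v‖ ^ 2) ^ (s / 2)) :
    (|(∫ x, (∫ σ, B (x.1 - x.2) (σ : EuclideanSpace ℝ (Fin N)) * ψ (vprime x.1 x.2 σ)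
            ∂(sphereMeasure N)) ∂(μ.prod μ))
        - ∫ x, (∫ σ, B (x.1 - x.2) (σ : EuclideanSpace ℝ (Fin N)) * ψ (vprime x.1 x.2 σ)
            ∂(sphereMeasure N)) ∂(ν.prod ν)|
      ≤ 2 ^ ((s + γ) / 2) * A₀ *
          (rnorm (s + γ) (μ + ν) * tvnorm 0 μ ν + rnorm 0 (μ + ν) * tvnorm (s + γ) μ ν))
    ∧ (|(∫ x, (∫ σ, B (x.1 - x.2) (σ : EuclideanSpace ℝ (Fin N)) ∂(sphereMeasure N)) * ψ x.1
            ∂(μ.prod μ))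
        - ∫ x, (∫ σ, B (x.1 - x.2) (σ : EuclideanSpace ℝ (Fin N)) ∂(sphereMeasure N)) * ψ x.1
            ∂(ν.prod ν)|
      ≤ 2 ^ ((s + γ) / 2) * A₀ *
          (rnorm (s + γ) (μ + ν) * tvnorm 0 μ ν + rnorm 0 (μ + ν) * tvnorm (s + γ) μ ν)) :=
  collision_operator_difference_bounds_general N γ s hγ0 hγ2 hs b A₀ hA₀ hA0 e₁ he₁ B hBm hB0 hBb μ
    ν hμ hν ψ hψm hψ
end

section
/- Let p ≥ 1 be a real number and k_p := ⌊(p+1)/2⌋. Then for all x, y ≥ 0: Σ_{k=0}^{k_p−1} C(p,k) (x^k y^{p−k} + x^{p−k} y^k) ≤ (x+y)^p ≤ Σ_{k=0}^{k_p} C(p,k) (x^k y^{p−k} + x^{p−k} y^k). -/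
open Real Finset

/-- The generalized binomial coefficient `C(p,k) = p(p-1)⋯(p-k+1)/k!` for real `p`,
with `C(p,0) = 1`. -/
noncomputable def genBinom (p : ℝ) (k : ℕ) : ℝ :=
  (∏ i ∈ Finset.range k, (p - i)) / (Nat.factorial k)

/-!
For `0 ≤ x ≤ y` write `(x + y)^p = y^p (1 + x/y)^p`. On `t ≥ 0` the truncated binomial series
`∑_{k<n} C(p,k) t^k` lies below `(1 + t)^p` when `n ≤ p + 1`, and above it when
`p + 1 ≤ n ≤ p + 2`: induct on `n`, since differentiating the truncation for the exponent `p`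
gives `p` times the truncation for `p - 1`, just as `(1 + t)^p` differentiates to `p (1 + t)^(p-1)`.
With `s = ⌊p⌋` this brackets `(x + y)^p` between the sums of `C(p,k) x^k y^(p-k)` over `k ≤ s`
and over `k ≤ s + 1`. As `k_p = ⌊(s + 1)/2⌋`, the reflections `k ↦ s - k` and `k ↦ s + 1 - k`
pair each swapped term `C(p,k) x^(p-k) y^k` of the symmetric sums with a term of these brackets
that the symmetric sums do not use, and the paired terms compare: the monomials because `x ≤ y`,
the coefficients because `C(p,j) ≤ C(p,l)` for `j ≤ l`, `j + l ≤ p`, and conversely for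
`p ≤ j + l`, `l ≤ p + 1`.
-/

theorem genBinom_zero (p : ℝ) : genBinom p 0 = 1 := by simp [genBinom]

theorem genBinom_succ_mul (p : ℝ) (k : ℕ) :
    genBinom p (k + 1) * (k + 1) = genBinom p k * (p - k) := by
  simp only [genBinom, prod_range_succ, Nat.factorial_succ, Nat.cast_mul, Nat.cast_succ]
  field_simp

theorem succ_mul_genBinom_succ (p : ℝ) (k : ℕ) :
    (k + 1) * genBinom p (k + 1) = p * genBinom (p - 1) k := by
  simp only [genBinom, prod_range_succ', Nat.factorial_succ, Nat.cast_mul, Nat.cast_succ,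
    Nat.cast_zero, sub_zero, sub_sub, add_comm (1 : ℝ)]
  field_simp

theorem genBinom_nonneg {p : ℝ} {k : ℕ} (hk : (k : ℝ) ≤ p + 1) : 0 ≤ genBinom p k := by
  refine div_nonneg (prod_nonneg fun i hi => ?_) (Nat.cast_nonneg _)
  have : (i : ℝ) + 1 ≤ k := by exact_mod_cast mem_range.1 hi
  linarith

/- Induct on `l - j`, moving both ends inward: `C(p,j+1)/C(p,j) = (p-j)/(j+1)`,
`C(p,l)/C(p,l-1) = (p-l+1)/l`, and `(j+1) l ≤ (p-j)(p-l+1)` when `j + l ≤ p`. -/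
theorem genBinom_le_genBinom_of_add_le {p : ℝ} {j l : ℕ} (hjl : j ≤ l) (h : (j + l : ℝ) ≤ p) :
    genBinom p j ≤ genBinom p l := by
  obtain ⟨d, rfl⟩ := Nat.exists_eq_add_of_le hjl
  clear hjl
  induction d using Nat.strong_induction_on generalizing j with
  | _ d ih =>
  have hj := genBinom_succ_mul p j
  rcases d with _ | _ | d
  · simp
  · push_cast at h
    have := genBinom_nonneg (p := p) (k := j) (by linarith)
    nlinarith
  · have hin := ih d (by omega) (j := j + 1) (by push_cast at h ⊢; linarith)
    have hl := genBinom_succ_mul p (j + 1 + d)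
    have hl0 := genBinom_nonneg (p := p) (k := j + 1 + d) (by push_cast at h ⊢; linarith)
    rw [show j + (d + 1 + 1) = j + 1 + d + 1 by omega]
    push_cast at h hl ⊢
    have hpos : 0 < (p - j) * (j + d + 2) := by
      have : (0 : ℝ) < p - j := by linarith
      positivity
    refine le_of_mul_le_mul_right ?_ hpos
    have hr : ((j : ℝ) + 1) * (j + d + 2) ≤ (p - (j + 1 + d)) * (p - j) := by nlinarith
    nlinarith [mul_le_mul_of_nonneg_right hin (by positivity : (0:ℝ) ≤ (j + 1) * (j + d + 2)),
      mul_le_mul_of_nonneg_left hr hl0]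

theorem genBinom_le_genBinom_of_le_add {p : ℝ} {j l : ℕ} (hjl : j ≤ l) (h : p ≤ j + l)
    (hl : (l : ℝ) ≤ p + 1) : genBinom p l ≤ genBinom p j := by
  obtain ⟨d, rfl⟩ := Nat.exists_eq_add_of_le hjl
  clear hjl
  induction d using Nat.strong_induction_on generalizing j with
  | _ d ih =>
  have hj := genBinom_succ_mul p j
  rcases d with _ | _ | d
  · simp
  · push_cast at h hl
    have := genBinom_nonneg (p := p) (k := j) (by linarith)
    nlinarith
  · have hin := ih d (by omega) (j := j + 1) (by push_cast at h ⊢; linarith)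
      (by push_cast at hl ⊢; linarith)
    have hstep := genBinom_succ_mul p (j + 1 + d)
    have hj0 := genBinom_nonneg (p := p) (k := j + 1) (by push_cast at hl ⊢; linarith)
    rw [show j + (d + 1 + 1) = j + 1 + d + 1 by omega]
    push_cast at h hl hstep hj0 ⊢
    have hpos : 0 < (p - j) * (j + d + 2) := by
      have : (0 : ℝ) < p - j := by linarith
      positivity
    refine le_of_mul_le_mul_right ?_ hpos
    have hr0 : 0 ≤ (p - (j + 1 + d)) * (p - j) := mul_nonneg (by linarith) (by linarith)
    have hr : (p - (j + 1 + d)) * (p - j) ≤ ((j : ℝ) + 1) * (j + d + 2) := by nlinarith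
    nlinarith [mul_le_mul_of_nonneg_right hin hr0, mul_le_mul_of_nonneg_left hr hj0]

noncomputable def binomTrunc (p : ℝ) (n : ℕ) (t : ℝ) : ℝ := ∑ k ∈ range n, genBinom p k * t ^ k

theorem binomTrunc_succ_zero (p : ℝ) (n : ℕ) : binomTrunc p (n + 1) 0 = 1 := by
  simp [binomTrunc, sum_range_succ', genBinom_zero]

theorem hasDerivAt_binomTrunc (p : ℝ) (n : ℕ) (t : ℝ) :
    HasDerivAt (binomTrunc p (n + 1)) (p * binomTrunc (p - 1) n t) t := by
  have h := HasDerivAt.fun_sum (u := range (n + 1))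
    fun k _ => (hasDerivAt_pow k t).const_mul (genBinom p k)
  refine h.congr_deriv ?_
  rw [sum_range_succ', binomTrunc, mul_sum]
  simp only [Nat.cast_zero, zero_mul, mul_zero, add_zero, Nat.add_sub_cancel]
  refine sum_congr rfl fun k _ => ?_
  push_cast
  linear_combination t ^ k * succ_mul_genBinom_succ p k

theorem hasDerivAt_one_add_rpow (p : ℝ) {s : ℝ} (hs : -1 < s) :
    HasDerivAt (fun t => (1 + t) ^ p) (p * (1 + s) ^ (p - 1)) s := by
  simpa using ((hasDerivAt_id s).const_add 1).rpow_const (p := p) (Or.inl (by simp; linarith))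

theorem le_of_hasDerivAt_le {f g f' g' : ℝ → ℝ} (h0 : f 0 ≤ g 0)
    (hf : ∀ s, 0 ≤ s → HasDerivAt f (f' s) s) (hg : ∀ s, 0 ≤ s → HasDerivAt g (g' s) s)
    (hfg : ∀ s, 0 ≤ s → f' s ≤ g' s) {t : ℝ} (ht : 0 ≤ t) : f t ≤ g t :=
  image_le_of_deriv_right_le_deriv_boundary
    (fun s hs => (hf s hs.1).continuousAt.continuousWithinAt)
    (fun s hs => (hf s hs.1).hasDerivWithinAt) h0
    (fun s hs => (hg s hs.1).continuousAt.continuousWithinAt)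
    (fun s hs => (hg s hs.1).hasDerivWithinAt) (fun s hs => hfg s hs.1) ⟨ht, le_rfl⟩

theorem binomTrunc_le_one_add_rpow {p : ℝ} {n : ℕ} (hn : n ≤ p + 1) {t : ℝ} (ht : 0 ≤ t) :
    binomTrunc p n t ≤ (1 + t) ^ p := by
  induction n generalizing p t with
  | zero => simpa [binomTrunc] using rpow_nonneg (by linarith) p
  | succ n ih =>
    push_cast at hn
    refine le_of_hasDerivAt_le (by simp [binomTrunc_succ_zero])
      (fun s _ => hasDerivAt_binomTrunc p n s)
      (fun s hs => hasDerivAt_one_add_rpow p (by linarith)) (fun s hs => ?_) ht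
    exact mul_le_mul_of_nonneg_left (ih (by linarith) hs) (by linarith [n.cast_nonneg (α := ℝ)])

theorem one_add_rpow_le_binomTrunc {p : ℝ} {n : ℕ} (hpn : p ≤ n) (hnp : n ≤ p + 1) {t : ℝ}
    (ht : 0 ≤ t) : (1 + t) ^ p ≤ binomTrunc p (n + 1) t := by
  induction n generalizing p t with
  | zero =>
    simpa [binomTrunc, genBinom_zero] using
      rpow_le_one_of_one_le_of_nonpos (by linarith) (by simpa using hpn)
  | succ n ih =>
    push_cast at hpn hnp
    refine le_of_hasDerivAt_le (by simp [binomTrunc_succ_zero])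
      (fun s hs => hasDerivAt_one_add_rpow p (by linarith))
      (fun s _ => hasDerivAt_binomTrunc p (n + 1) s) (fun s hs => ?_) ht
    exact mul_le_mul_of_nonneg_left (ih (by linarith) (by linarith) hs)
      (by linarith [n.cast_nonneg (α := ℝ)])

noncomputable def binomTerm (p x y : ℝ) (k : ℕ) : ℝ := genBinom p k * (x ^ (k : ℝ) * y ^ (p - k))

theorem binomTerm_nonneg {p x y : ℝ} {k : ℕ} (hk : (k : ℝ) ≤ p + 1) (hx : 0 ≤ x) (hy : 0 ≤ y) :
    0 ≤ binomTerm p x y k :=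
  mul_nonneg (genBinom_nonneg hk) (by positivity)

theorem binomTerm_zero_zero {p : ℝ} (hp : p ≠ 0) (k : ℕ) : binomTerm p 0 0 k = 0 := by
  rcases eq_or_ne k 0 with rfl | hk
  · simp [binomTerm, hp]
  · simp [binomTerm, hk]

theorem sum_binomTerm_eq_rpow_mul_binomTrunc (p : ℝ) (n : ℕ) (x : ℝ) {y : ℝ} (hy : 0 < y) :
    ∑ k ∈ range n, binomTerm p x y k = y ^ p * binomTrunc p n (x / y) := by
  rw [binomTrunc, mul_sum]
  refine sum_congr rfl fun k _ => ?_
  rw [binomTerm, div_pow, rpow_sub hy, rpow_natCast, rpow_natCast]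
  field_simp

theorem add_rpow_eq_rpow_mul_one_add_div_rpow (p : ℝ) {x y : ℝ} (hx : 0 ≤ x) (hy : 0 < y) :
    (x + y) ^ p = y ^ p * (1 + x / y) ^ p := by
  rw [← mul_rpow hy.le (by positivity), mul_one_add, mul_div_cancel₀ x hy.ne', add_comm]

theorem sum_binomTerm_le_add_rpow {p x y : ℝ} {n : ℕ} (hn : n ≤ p + 1) (hx : 0 ≤ x) (hy : 0 < y) :
    ∑ k ∈ range n, binomTerm p x y k ≤ (x + y) ^ p := by
  rw [sum_binomTerm_eq_rpow_mul_binomTrunc p n x hy, add_rpow_eq_rpow_mul_one_add_div_rpow p hx hy]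
  exact mul_le_mul_of_nonneg_left (binomTrunc_le_one_add_rpow hn (by positivity)) (by positivity)

theorem add_rpow_le_sum_binomTerm {p x y : ℝ} {n : ℕ} (hpn : p ≤ n) (hnp : n ≤ p + 1)
    (hx : 0 ≤ x) (hy : 0 < y) : (x + y) ^ p ≤ ∑ k ∈ range (n + 1), binomTerm p x y k := by
  rw [sum_binomTerm_eq_rpow_mul_binomTrunc p _ x hy, add_rpow_eq_rpow_mul_one_add_div_rpow p hx hy]
  exact mul_le_mul_of_nonneg_left (one_add_rpow_le_binomTrunc hpn hnp (by positivity))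
    (by positivity)

theorem rpow_add_mul_rpow_le {x y a b c : ℝ} (hx : 0 ≤ x) (hxy : x ≤ y) (hy : 0 < y) (ha : 0 ≤ a)
    (hc : 0 ≤ c) : x ^ (a + c) * y ^ b ≤ x ^ a * y ^ (b + c) := by
  rw [rpow_add_of_nonneg hx ha hc, rpow_add hy, mul_assoc, mul_comm (y ^ b)]
  gcongr

theorem binomTerm_swap_le_binomTerm {p x y : ℝ} {j l : ℕ} (hjl : j ≤ l) (h : (j + l : ℝ) ≤ p)
    (hx : 0 ≤ x) (hxy : x ≤ y) (hy : 0 < y) : binomTerm p y x j ≤ binomTerm p x y l := by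
  have hmono : y ^ (j : ℝ) * x ^ (p - j) ≤ x ^ (l : ℝ) * y ^ (p - l) := by
    have := rpow_add_mul_rpow_le hx hxy hy (Nat.cast_nonneg l) (sub_nonneg.2 h) (b := j)
    rw [mul_comm]; convert this using 3 <;> ring
  exact mul_le_mul (genBinom_le_genBinom_of_add_le hjl h) hmono (by positivity)
    (genBinom_nonneg (by linarith [(j.cast_nonneg : (0:ℝ) ≤ j)]))

theorem binomTerm_le_binomTerm_swap {p x y : ℝ} {j l : ℕ} (hjl : j ≤ l) (h : p ≤ j + l)
    (hl : (l : ℝ) ≤ p + 1) (hj : (j : ℝ) ≤ p) (hx : 0 ≤ x) (hxy : x ≤ y) (hy : 0 < y) :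
    binomTerm p x y l ≤ binomTerm p y x j := by
  have hmono : x ^ (l : ℝ) * y ^ (p - l) ≤ y ^ (j : ℝ) * x ^ (p - j) := by
    have := rpow_add_mul_rpow_le hx hxy hy (sub_nonneg.2 hj) (sub_nonneg.2 h) (b := p - l)
    rw [mul_comm (y ^ _)]; convert this using 3 <;> ring
  exact mul_le_mul (genBinom_le_genBinom_of_le_add hjl h hl) hmono (by positivity)
    (genBinom_nonneg (by linarith))

theorem Finset.sum_le_sum_of_injOn {ι κ M : Type*} [AddCommMonoid M] [PartialOrder M]
    [IsOrderedAddMonoid M] {s : Finset ι} {t : Finset κ} {f : ι → M} {g : κ → M} (e : ι → κ)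
    (he : Set.InjOn e s) (hst : Set.MapsTo e s t) (hg : ∀ k ∈ t, 0 ≤ g k)
    (hfg : ∀ i ∈ s, f i ≤ g (e i)) : ∑ i ∈ s, f i ≤ ∑ k ∈ t, g k := by
  classical
  calc ∑ i ∈ s, f i ≤ ∑ i ∈ s, g (e i) := sum_le_sum hfg
    _ = ∑ k ∈ s.image e, g k := (sum_image he).symm
    _ ≤ ∑ k ∈ t, g k :=
      sum_le_sum_of_subset_of_nonneg (image_subset_iff.2 hst) fun k hk _ => hg k hk

theorem sum_binomTerm_add_swap_le_add_rpow {p x y : ℝ} {s m : ℕ} (hs : s ≤ p)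
    (hm : 2 * m ≤ s + 1) (hx : 0 ≤ x) (hxy : x ≤ y) (hy : 0 < y) :
    ∑ k ∈ range m, (binomTerm p x y k + binomTerm p y x k) ≤ (x + y) ^ p := by
  have hreflect : ∑ j ∈ range m, binomTerm p y x j ≤ ∑ k ∈ Ico m (s + 1), binomTerm p x y k := by
    refine sum_le_sum_of_injOn (fun j => s - j) (fun i hi j hj hij => ?_) (fun j hj => ?_)
      (fun k hk => ?_) (fun j hj => ?_)
    all_goals simp only [coe_range, coe_Ico, Set.mem_Iio, Set.mem_Ico, mem_Ico, mem_range] at *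
    · omega
    · omega
    · have : (k : ℝ) ≤ s := by exact_mod_cast Nat.lt_succ_iff.1 hk.2
      exact binomTerm_nonneg (by linarith) hx hy.le
    · refine binomTerm_swap_le_binomTerm (by omega) ?_ hx hxy hy
      rwa [← Nat.cast_add, Nat.add_sub_cancel' (by omega)]
  calc ∑ k ∈ range m, (binomTerm p x y k + binomTerm p y x k)
      = ∑ k ∈ range m, binomTerm p x y k + ∑ j ∈ range m, binomTerm p y x j := sum_add_distrib
    _ ≤ ∑ k ∈ range m, binomTerm p x y k + ∑ k ∈ Ico m (s + 1), binomTerm p x y k := by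
      gcongr
    _ = ∑ k ∈ range (s + 1), binomTerm p x y k := sum_range_add_sum_Ico _ (by omega)
    _ ≤ (x + y) ^ p := sum_binomTerm_le_add_rpow (by push_cast; linarith) hx hy

theorem add_rpow_le_sum_binomTerm_add_swap {p x y : ℝ} {s m : ℕ} (hs : s ≤ p) (hps : p ≤ s + 1)
    (hm : s ≤ 2 * m) (hms : m ≤ s + 1) (hx : 0 ≤ x) (hxy : x ≤ y) (hy : 0 < y) :
    (x + y) ^ p ≤ ∑ k ∈ range (m + 1), (binomTerm p x y k + binomTerm p y x k) := by
  have hreflect :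
      ∑ k ∈ Ico (m + 1) (s + 2), binomTerm p x y k ≤ ∑ j ∈ range (m + 1), binomTerm p y x j := by
    refine sum_le_sum_of_injOn (fun k => s + 1 - k) (fun i hi j hj hij => ?_) (fun k hk => ?_)
      (fun j hj => ?_) (fun k hk => ?_)
    all_goals simp only [coe_range, coe_Ico, Set.mem_Iio, Set.mem_Ico, mem_Ico, mem_range] at *
    · omega
    · omega
    · have : (j : ℝ) ≤ s + 1 := by exact_mod_cast (by omega : j ≤ s + 1)
      exact binomTerm_nonneg (by linarith) hy.le hx
    · have hks : k ≤ s + 1 := by omega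
      have hk : (k : ℝ) ≤ s + 1 := by exact_mod_cast hks
      have hj : ((s + 1 - k : ℕ) : ℝ) ≤ s := by exact_mod_cast (by omega : s + 1 - k ≤ s)
      refine binomTerm_le_binomTerm_swap (by omega) ?_ (by linarith) (by linarith) hx hxy hy
      rwa [← Nat.cast_add, Nat.sub_add_cancel hks, Nat.cast_succ]
  calc (x + y) ^ p
      ≤ ∑ k ∈ range (s + 1 + 1), binomTerm p x y k :=
        add_rpow_le_sum_binomTerm (by push_cast; linarith) (by push_cast; linarith) hx hy
    _ = ∑ k ∈ range (m + 1), binomTerm p x y k + ∑ k ∈ Ico (m + 1) (s + 2), binomTerm p x y k :=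
      (sum_range_add_sum_Ico _ (by omega)).symm
    _ ≤ ∑ k ∈ range (m + 1), binomTerm p x y k + ∑ j ∈ range (m + 1), binomTerm p y x j := by
      gcongr
    _ = ∑ k ∈ range (m + 1), (binomTerm p x y k + binomTerm p y x k) := sum_add_distrib.symm

/-- **Lemma 3.1, fractional binomial expansion.** For real `p ≥ 1`,
`k_p = ⌊(p+1)/2⌋` and all `x, y ≥ 0`:
`Σ_{k=0}^{k_p-1} C(p,k)(x^k y^{p-k} + x^{p-k} y^k) ≤ (x+y)^p
  ≤ Σ_{k=0}^{k_p} C(p,k)(x^k y^{p-k} + x^{p-k} y^k)`. -/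
theorem fractional_binomial_expansion (p : ℝ) (hp : 1 ≤ p) (x y : ℝ)
    (hx : 0 ≤ x) (hy : 0 ≤ y) :
    (∑ k ∈ Finset.range ⌊(p + 1) / 2⌋₊,
        genBinom p k * (x ^ (k : ℝ) * y ^ (p - k) + x ^ (p - k) * y ^ (k : ℝ)))
      ≤ (x + y) ^ p
    ∧ (x + y) ^ p ≤
      ∑ k ∈ Finset.range (⌊(p + 1) / 2⌋₊ + 1),
        genBinom p k * (x ^ (k : ℝ) * y ^ (p - k) + x ^ (p - k) * y ^ (k : ℝ)) := by
  have hsplit (x y : ℝ) (k : ℕ) :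
      genBinom p k * (x ^ (k : ℝ) * y ^ (p - k) + x ^ (p - k) * y ^ (k : ℝ))
        = binomTerm p x y k + binomTerm p y x k := by
    simp only [binomTerm]; ring
  simp only [hsplit]
  wlog hxy : x ≤ y generalizing x y
  · simpa only [add_comm] using this y x hy hx (le_of_not_ge hxy)
  rcases hy.eq_or_lt with rfl | hy
  · obtain rfl := le_antisymm hxy hx
    simp [binomTerm_zero_zero (by linarith : p ≠ 0), zero_rpow (by linarith : p ≠ 0)]
  have hs : (⌊p⌋₊ : ℝ) ≤ p := Nat.floor_le (by linarith)
  have hps : p ≤ ⌊p⌋₊ + 1 := (Nat.lt_floor_add_one p).le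
  have hm : ⌊(p + 1) / 2⌋₊ = (⌊p⌋₊ + 1) / 2 := by
    rw [Nat.floor_div_ofNat, Nat.floor_add_one (by linarith)]
  rw [hm]
  exact ⟨sum_binomTerm_add_swap_le_add_rpow hs (by omega) hx hxy hy,
    add_rpow_le_sum_binomTerm_add_swap hs hps (by omega) (by omega) hx hxy hy⟩
end

section
/- Let 0 < α < ∞ and 0 < R < ∞, let g : [0,R] → ℝ be continuous, and let S : [0,R] → ℝ be continuously differentiable with S(0) = 0 and S'(x) < 0 for all x ∈ [0,R). Then lim_{λ→∞} ( (−λ S'(0))^α / Γ(α) ) · ∫₀^R x^{α−1} g(x) e^{λ S(x)} dx = g(0); equivalently, ∫₀^R x^{α−1} g(x) e^{λ S(x)} dx = Γ(α) (−λ S'(0))^{−α} (g(0) + o(1)) as λ → ∞. -/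
/-!
Write `S x = x φ(x)` with `φ` the slope of `S` at `0`, extended by `φ(0) = S'(0)`. Then `φ` is
continuous and negative on `[0, R]`, so `S x ≤ -b x` for some `b > 0`. After the
substitution `x = t / λ`,
`λ^α ∫₀^R x^{α-1} g(x) e^{λ S(x)} dx = ∫₀^{λR} t^{α-1} g(t/λ) e^{λ S(t/λ)} dt`,
whose integrand is dominated by `sup |g| · t^{α-1} e^{-b t}` and tends pointwise to
`g(0) t^{α-1} e^{S'(0) t}`. Dominated convergence and
`∫₀^∞ t^{α-1} e^{-c t} dt = Γ(α) c^{-α}` finish the proof.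
-/

open Real Filter intervalIntegral
open Set MeasureTheory Topology

theorem continuousOn_update_slope {f : ℝ → ℝ} {f' a : ℝ} {s : Set ℝ} (hf : ContinuousOn f s)
    (hfa : HasDerivWithinAt f f' s a) : ContinuousOn (Function.update (slope f a) a f') s := by
  intro x hx
  rcases eq_or_ne x a with rfl | hxa
  · exact continuousWithinAt_update_same.2 (hasDerivWithinAt_iff_tendsto_slope.1 hfa)
  · refine (continuousWithinAt_update_of_ne hxa).2 ?_
    rw [slope_fun_def_field]
    exact ((hf x hx).sub continuousWithinAt_const).div
      (continuousWithinAt_id.sub continuousWithinAt_const) (sub_ne_zero.2 hxa)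

/-- The slope `S x / x` is continuous and negative on the compact `[0, R]`, hence bounded away
from `0`. -/
theorem exists_pos_le_neg_mul_of_hasDerivWithinAt_neg {R : ℝ} {S S' : ℝ → ℝ} (hR : 0 < R)
    (hS : ∀ x ∈ Icc 0 R, HasDerivWithinAt S (S' x) (Icc 0 R) x) (hS0 : S 0 = 0)
    (hSneg : ∀ x ∈ Ico 0 R, S' x < 0) : ∃ b > 0, ∀ x ∈ Icc 0 R, S x ≤ -(b * x) := by
  have h0 : (0 : ℝ) ∈ Icc 0 R := left_mem_Icc.2 hR.le
  have hScont : ContinuousOn S (Icc 0 R) := fun x hx => (hS x hx).continuousWithinAt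
  have hanti : StrictAntiOn S (Icc 0 R) := by
    refine strictAntiOn_of_hasDerivWithinAt_neg (convex_Icc 0 R) hScont
      (fun x hx => (hS x (interior_subset hx)).mono interior_subset) fun x hx => ?_
    rw [interior_Icc] at hx
    exact hSneg x (Ioo_subset_Ico_self hx)
  set φ := Function.update (slope S 0) 0 (S' 0)
  have hSφ : ∀ x, S x = x * φ x := by
    intro x
    rcases eq_or_ne x 0 with rfl | hx
    · simp [hS0]
    · simp only [φ, Function.update_of_ne hx, slope_def_field, hS0, sub_zero]
      field_simp
  have hφneg : ∀ x ∈ Icc 0 R, φ x < 0 := by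
    intro x hx
    rcases eq_or_ne x 0 with rfl | hx0
    · simpa [φ] using hSneg 0 (left_mem_Ico.2 hR)
    · have hxpos : 0 < x := lt_of_le_of_ne hx.1 hx0.symm
      have hSx : S x < 0 := hS0 ▸ hanti h0 hx hxpos
      have hSx_eq := hSφ x
      nlinarith
  obtain ⟨x₀, hx₀, hmax⟩ := isCompact_Icc.exists_isMaxOn (nonempty_Icc.2 hR.le)
    (continuousOn_update_slope hScont (hS 0 h0))
  refine ⟨-φ x₀, neg_pos.2 (hφneg x₀ hx₀), fun x hx => ?_⟩
  have hφx : φ x ≤ φ x₀ := hmax hx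
  rw [hSφ x]
  nlinarith [mul_le_mul_of_nonneg_left hφx hx.1]

theorem tendsto_const_div_atTop_nhdsGT_zero {t : ℝ} (ht : 0 < t) :
    Tendsto (fun lam => t / lam) atTop (𝓝[>] 0) :=
  tendsto_nhdsWithin_iff.2 ⟨tendsto_const_nhds.div_atTop tendsto_id,
    (eventually_gt_atTop 0).mono fun _ hlam => div_pos ht hlam⟩

theorem tendsto_mul_comp_div_atTop {S : ℝ → ℝ} {S₀' t : ℝ}
    (hS : HasDerivWithinAt S S₀' (Ioi 0) 0) (hS0 : S 0 = 0) (ht : 0 < t) :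
    Tendsto (fun lam => lam * S (t / lam)) atTop (𝓝 (t * S₀')) := by
  have hslope := (hasDerivWithinAt_iff_tendsto_slope' (lt_irrefl 0)).1 hS
  refine ((hslope.comp (tendsto_const_div_atTop_nhdsGT_zero ht)).const_mul t).congr' ?_
  filter_upwards [eventually_gt_atTop 0] with lam hlam
  simp only [Function.comp_apply, slope_def_field, hS0, sub_zero]
  field_simp

/-- The integrand after the substitution `x = t / lam`, extended by zero outside `(0, lam * R]`. -/
noncomputable def rescaledIntegrand (α R : ℝ) (g S : ℝ → ℝ) (lam : ℝ) : ℝ → ℝ :=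
  indicator (Ioc 0 (lam * R)) fun t => t ^ (α - 1) * g (t / lam) * exp (lam * S (t / lam))

section rescaledIntegrand

variable {α R lam : ℝ} {g S : ℝ → ℝ}

theorem mapsTo_div_Ioc_mul (hlam : 0 < lam) : MapsTo (· / lam) (Ioc 0 (lam * R)) (Icc 0 R) :=
  fun _ ht => ⟨div_nonneg ht.1.le hlam.le, (div_le_iff₀' hlam).2 ht.2⟩

theorem integral_rescaledIntegrand (hlam : 0 < lam) (hR : 0 ≤ R) :
    ∫ t in Ioi 0, rescaledIntegrand α R g S lam t =
      lam ^ α * ∫ x in (0 : ℝ)..R, x ^ (α - 1) * g x * exp (lam * S x) := by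
  have hlamR : 0 ≤ lam * R := mul_nonneg hlam.le hR
  have hpow : ∀ t ∈ uIcc 0 (lam * R), t ^ (α - 1) * g (t / lam) * exp (lam * S (t / lam)) =
      lam ^ (α - 1) * ((t / lam) ^ (α - 1) * g (t / lam) * exp (lam * S (t / lam))) := by
    intro t ht
    rw [uIcc_of_le hlamR] at ht
    rw [← mul_assoc, ← mul_assoc, ← mul_rpow hlam.le (div_nonneg ht.1 hlam.le),
      mul_div_cancel₀ t hlam.ne']
  rw [rescaledIntegrand, setIntegral_indicator measurableSet_Ioc,
    inter_eq_right.2 Ioc_subset_Ioi_self, ← integral_of_le hlamR, integral_congr hpow,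
    intervalIntegral.integral_const_mul,
    intervalIntegral.integral_comp_div (fun x => x ^ (α - 1) * g x * exp (lam * S x)) hlam.ne',
    zero_div, mul_div_cancel_left₀ R hlam.ne', smul_eq_mul, ← mul_assoc,
    ← rpow_add_one hlam.ne', sub_add_cancel]

theorem aestronglyMeasurable_rescaledIntegrand (hlam : 0 < lam) (hg : ContinuousOn g (Icc 0 R))
    (hS : ContinuousOn S (Icc 0 R)) :
    AEStronglyMeasurable (rescaledIntegrand α R g S lam) volume := by
  refine (aestronglyMeasurable_indicator_iff measurableSet_Ioc).2
    (ContinuousOn.aestronglyMeasurable ?_ measurableSet_Ioc)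
  have hdiv : ContinuousOn (· / lam) (Ioc 0 (lam * R)) :=
    (continuous_id.div_const lam).continuousOn
  have hpow : ContinuousOn (fun t : ℝ => t ^ (α - 1)) (Ioc 0 (lam * R)) :=
    fun t ht => (continuousAt_rpow_const t (α - 1) (Or.inl ht.1.ne')).continuousWithinAt
  exact (hpow.mul (hg.comp hdiv (mapsTo_div_Ioc_mul hlam))).mul
    (continuous_exp.comp_continuousOn
      (continuousOn_const.mul (hS.comp hdiv (mapsTo_div_Ioc_mul hlam))))

theorem norm_rescaledIntegrand_le {M b t : ℝ} (hlam : 0 < lam) (ht : 0 < t) (hM0 : 0 ≤ M)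
    (hM : ∀ x ∈ Icc 0 R, ‖g x‖ ≤ M) (hSb : ∀ x ∈ Icc 0 R, S x ≤ -(b * x)) :
    ‖rescaledIntegrand α R g S lam t‖ ≤ M * (t ^ (α - 1) * exp (-(b * t))) := by
  have htα : 0 ≤ t ^ (α - 1) := rpow_nonneg ht.le _
  by_cases htR : t ∈ Ioc 0 (lam * R)
  · have hx := mapsTo_div_Ioc_mul hlam htR
    have hexp : lam * S (t / lam) ≤ -(b * t) := by
      calc lam * S (t / lam) ≤ lam * -(b * (t / lam)) :=
            mul_le_mul_of_nonneg_left (hSb _ hx) hlam.le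
        _ = -(b * t) := by field_simp
    rw [rescaledIntegrand, indicator_of_mem htR, norm_mul, norm_mul, norm_of_nonneg htα,
      norm_of_nonneg (exp_pos _).le]
    calc t ^ (α - 1) * ‖g (t / lam)‖ * exp (lam * S (t / lam))
        ≤ t ^ (α - 1) * M * exp (-(b * t)) := by gcongr; exact hM _ hx
      _ = M * (t ^ (α - 1) * exp (-(b * t))) := by ring
  · rw [rescaledIntegrand, indicator_of_notMem htR, norm_zero]
    positivity

theorem tendsto_rescaledIntegrand {S₀' t : ℝ} (hR : 0 < R) (hg : ContinuousWithinAt g (Ioi 0) 0)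
    (hS : HasDerivWithinAt S S₀' (Ioi 0) 0) (hS0 : S 0 = 0) (ht : 0 < t) :
    Tendsto (fun lam => rescaledIntegrand α R g S lam t) atTop
      (𝓝 (t ^ (α - 1) * g 0 * exp (t * S₀'))) := by
  refine ((tendsto_const_nhds.mul (hg.tendsto.comp (tendsto_const_div_atTop_nhdsGT_zero ht))).mul
    ((continuous_exp.tendsto _).comp (tendsto_mul_comp_div_atTop hS hS0 ht))).congr' ?_
  filter_upwards [eventually_ge_atTop (t / R)] with lam hlam
  have htR : t ∈ Ioc 0 (lam * R) := ⟨ht, (div_le_iff₀ hR).1 hlam⟩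
  rw [rescaledIntegrand, indicator_of_mem htR]
  rfl

theorem tendsto_integral_rescaledIntegrand {b c : ℝ} (hα : 0 < α) (hR : 0 < R)
    (hg : ContinuousOn g (Icc 0 R)) (hS : ContinuousOn S (Icc 0 R))
    (hS₀' : HasDerivWithinAt S (-c) (Ioi 0) 0) (hS0 : S 0 = 0) (hb : 0 < b)
    (hSb : ∀ x ∈ Icc 0 R, S x ≤ -(b * x)) :
    Tendsto (fun lam => ∫ t in Ioi 0, rescaledIntegrand α R g S lam t) atTop
      (𝓝 (∫ t in Ioi 0, t ^ (α - 1) * g 0 * exp (-(c * t)))) := by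
  obtain ⟨M, hM⟩ := isCompact_Icc.exists_bound_of_continuousOn hg
  have hM0 : 0 ≤ M := (norm_nonneg _).trans (hM 0 (left_mem_Icc.2 hR.le))
  refine tendsto_integral_filter_of_dominated_convergence
    (fun t => M * (t ^ (α - 1) * exp (-(b * t)))) ?_ ?_ ?_ ?_
  · filter_upwards [eventually_gt_atTop 0] with lam hlam
    exact (aestronglyMeasurable_rescaledIntegrand hlam hg hS).restrict
  · filter_upwards [eventually_gt_atTop 0] with lam hlam
    filter_upwards [ae_restrict_mem measurableSet_Ioi] with t ht
    exact norm_rescaledIntegrand_le hlam ht hM0 hM hSb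
  · have hint : IntegrableOn (fun t : ℝ => t ^ (α - 1) * exp (-(b * t))) (Ioi 0) := by
      simpa using integrableOn_rpow_mul_exp_neg_mul_rpow (s := α - 1) (p := 1) (by linarith)
        one_pos hb
    exact hint.const_mul M
  · filter_upwards [ae_restrict_mem measurableSet_Ioi] with t ht
    have hcont : ContinuousWithinAt g (Ioi 0) 0 :=
      (hg 0 (left_mem_Icc.2 hR.le)).mono_of_mem_nhdsWithin (Icc_mem_nhdsGT hR)
    simpa [mul_comm c t] using tendsto_rescaledIntegrand hR hcont hS₀' hS0 ht

end rescaledIntegrand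

theorem stationary_phase_boundary_general (α R : ℝ) (hα : 0 < α) (hR : 0 < R)
    (g S S' : ℝ → ℝ)
    (hg : ContinuousOn g (Set.Icc 0 R))
    (hS : ∀ x ∈ Set.Icc 0 R, HasDerivWithinAt S (S' x) (Set.Icc 0 R) x)
    (hS0 : S 0 = 0) (hSneg : ∀ x ∈ Set.Ico 0 R, S' x < 0) :
    Tendsto (fun lam : ℝ =>
        ((-lam * S' 0) ^ α / Real.Gamma α) *
          ∫ x in (0:ℝ)..R, x ^ (α - 1) * g x * Real.exp (lam * S x))
      atTop (nhds (g 0)) := by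
  set c := -S' 0
  have hc : 0 < c := neg_pos.2 (hSneg 0 (left_mem_Ico.2 hR))
  obtain ⟨b, hb, hSb⟩ := exists_pos_le_neg_mul_of_hasDerivWithinAt_neg hR hS hS0 hSneg
  have hS₀' : HasDerivWithinAt S (-c) (Ioi 0) 0 := by
    rw [neg_neg]
    exact (hS 0 (left_mem_Icc.2 hR.le)).mono_of_mem_nhdsWithin (Icc_mem_nhdsGT hR)
  have hlim := (tendsto_integral_rescaledIntegrand hα hR hg
    (fun x hx => (hS x hx).continuousWithinAt) hS₀' hS0 hb hSb).const_mul (c ^ α / Gamma α)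
  have hvalue : c ^ α / Gamma α * ∫ t in Ioi 0, t ^ (α - 1) * g 0 * exp (-(c * t)) = g 0 := by
    simp_rw [mul_comm _ (g 0), mul_assoc]
    rw [MeasureTheory.integral_const_mul, integral_rpow_mul_exp_neg_mul_Ioi hα hc, one_div,
      inv_rpow hc.le]
    field_simp [(Gamma_pos_of_pos hα).ne', (rpow_pos_of_pos hc α).ne']
  rw [hvalue] at hlim
  refine hlim.congr' ?_
  filter_upwards [eventually_gt_atTop 0] with lam hlam
  rw [integral_rescaledIntegrand hlam hR.le, neg_mul, ← mul_neg, mul_rpow hlam.le hc.le]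
  ring

/-- **Lemma 3.2, a stationary phase result.** Let `0 < α`, `0 < R`,
`g` continuous on `[0,R]`, `S` continuously differentiable on `[0,R]` with `S(0) = 0`
and `S'(x) < 0` on `[0,R)`. Then
`((-λ S'(0))^α / Γ(α)) ∫₀^R x^{α-1} g(x) e^{λ S(x)} dx → g(0)` as `λ → ∞`. -/
theorem stationary_phase_boundary (α R : ℝ) (hα : 0 < α) (hR : 0 < R)
    (g S S' : ℝ → ℝ)
    (hg : ContinuousOn g (Set.Icc 0 R))
    (hS : ∀ x ∈ Set.Icc 0 R, HasDerivWithinAt S (S' x) (Set.Icc 0 R) x)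
    (hS' : ContinuousOn S' (Set.Icc 0 R))
    (hS0 : S 0 = 0) (hSneg : ∀ x ∈ Set.Ico 0 R, S' x < 0) :
    Tendsto (fun lam : ℝ =>
        ((-lam * S' 0) ^ α / Real.Gamma α) *
          ∫ x in (0:ℝ)..R, x ^ (α - 1) * g x * Real.exp (lam * S x))
      atTop (nhds (g 0)) :=
  stationary_phase_boundary_general α R hα hR g S S' hg hS hS0 hSneg
end

section
/- For every real number p ≥ 3, with k_p := ⌊(p+1)/2⌋, one has Σ_{k=1}^{k_p} C(p,k) B(k, p−k) ≤ 4 log p. -/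
/-! For integral `1 ≤ k < p` the Beta integral is `B(k, p - k) = (k-1)! / ((p-k)(p-k+1)⋯(p-1))`,
so each summand collapses to `p / (k (p - k)) = 1/k + 1/(p - k)`. Over `k ≤ m := k_p` the first
parts form a harmonic sum, at most `1 + log m ≤ 1 + log p`, and the second parts are at most
`m / (p - m) ≤ 2` because `m ≤ (p + 1)/2` and `p ≥ 3`. Finally `3 ≤ 3 log p` as `p ≥ 3 > e`. -/

open Real Finset

/-- The Beta function `B(x,y) = ∫₀¹ t^{x-1} (1-t)^{y-1} dt`. -/
noncomputable def betaFn (x y : ℝ) : ℝ :=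
  ∫ t in (0:ℝ)..1, t ^ (x - 1) * (1 - t) ^ (y - 1)

open scoped Nat

lemma betaFn_ofReal (x y : ℝ) : (betaFn x y : ℂ) = Complex.betaIntegral x y := by
  rw [betaFn, Complex.betaIntegral, ← intervalIntegral.integral_ofReal]
  refine intervalIntegral.integral_congr fun t ht => ?_
  rw [Set.uIcc_of_le zero_le_one] at ht
  push_cast
  rw [← Complex.ofReal_one, ← Complex.ofReal_sub, ← Complex.ofReal_sub, ← Complex.ofReal_sub,
    ← Complex.ofReal_cpow ht.1, ← Complex.ofReal_cpow (sub_nonneg.2 ht.2)]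

lemma betaFn_nat_add_one_left {y : ℝ} (hy : 0 < y) (n : ℕ) :
    betaFn (n + 1) y = n ! / ∏ j ∈ range (n + 1), (y + j) := by
  have h := betaFn_ofReal (n + 1) y
  rw [Complex.betaIntegral_symm] at h
  push_cast at h
  rw [Complex.betaIntegral_eval_nat_add_one_right (by simpa using hy)] at h
  exact_mod_cast h

/-- Both sides are the descending product `p (p-1) ⋯ (p-k)`. -/
lemma prod_range_sub_mul_sub {R : Type*} [CommRing R] (p : R) (k : ℕ) :
    (∏ i ∈ range k, (p - i)) * (p - k) = p * ∏ j ∈ range k, (p - k + j) := by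
  rw [← prod_range_reflect (fun j : ℕ => p - k + j), ← prod_range_succ (fun i : ℕ => p - (i : R)),
    prod_range_succ', Nat.cast_zero, sub_zero, mul_comm]
  congr 1
  refine prod_congr rfl fun j hj => ?_
  have hjk := mem_range.1 hj
  rw [Nat.cast_sub (by omega), Nat.cast_sub (by omega)]
  push_cast
  ring

lemma genBinom_mul_betaFn {p : ℝ} {k : ℕ} (hk : 1 ≤ k) (hkp : (k : ℝ) < p) :
    genBinom p k * betaFn k (p - k) = (k : ℝ)⁻¹ + (p - k)⁻¹ := by
  obtain ⟨n, rfl⟩ : ∃ n, k = n + 1 := ⟨k - 1, by omega⟩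
  have hpk : 0 < p - (n + 1 : ℕ) := sub_pos.2 hkp
  have hprod := prod_range_sub_mul_sub p (n + 1)
  have hasc : 0 < ∏ j ∈ range (n + 1), (p - (n + 1 : ℕ) + j) :=
    prod_pos fun j _ => by positivity
  push_cast at hpk hprod hasc ⊢
  rw [genBinom, betaFn_nat_add_one_left hpk, Nat.factorial_succ]
  push_cast
  field_simp
  linear_combination hprod

lemma sum_Icc_inv_le_one_add_log (m : ℕ) : ∑ k ∈ Icc 1 m, (k : ℝ)⁻¹ ≤ 1 + log m := by
  simpa [harmonic_eq_sum_Icc] using harmonic_le_one_add_log m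

lemma sum_Icc_inv_sub_le {p : ℝ} {m : ℕ} (hmp : (m : ℝ) < p) :
    ∑ k ∈ Icc 1 m, (p - k)⁻¹ ≤ m / (p - m) := by
  calc ∑ k ∈ Icc 1 m, (p - k)⁻¹ ≤ ∑ _k ∈ Icc 1 m, (p - m)⁻¹ := by
        refine sum_le_sum fun k hk => inv_anti₀ (sub_pos.2 hmp) ?_
        exact sub_le_sub_left (Nat.cast_le.2 (mem_Icc.1 hk).2) p
    _ = m / (p - m) := by simp [div_eq_mul_inv]

/-- **Lemma 3.3, first estimate.** For every real `p ≥ 3`, with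
`k_p = ⌊(p+1)/2⌋`, one has `Σ_{k=1}^{k_p} C(p,k) B(k, p-k) ≤ 4 log p`. -/
theorem beta_binomial_sum_log_bound (p : ℝ) (hp : 3 ≤ p) :
    ∑ k ∈ Finset.Icc 1 ⌊(p + 1) / 2⌋₊, genBinom p k * betaFn (k : ℝ) (p - k)
      ≤ 4 * Real.log p := by
  set m := ⌊(p + 1) / 2⌋₊
  have hm : (m : ℝ) ≤ (p + 1) / 2 := Nat.floor_le (by linarith)
  have hm1 : 1 ≤ m := Nat.le_floor (by push_cast; linarith)
  have hmp : (m : ℝ) < p := by linarith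
  have hterm : ∀ k ∈ Icc 1 m, genBinom p k * betaFn k (p - k) = (k : ℝ)⁻¹ + (p - k)⁻¹ :=
    fun k hk => genBinom_mul_betaFn (mem_Icc.1 hk).1
      (lt_of_le_of_lt (Nat.cast_le.2 (mem_Icc.1 hk).2) hmp)
  have hlog_m : log m ≤ log p := log_le_log (by exact_mod_cast hm1) hmp.le
  have htail : (m : ℝ) / (p - m) ≤ 2 := by rw [div_le_iff₀ (by linarith)]; linarith
  have hlog_p : 1 ≤ log p := (le_log_iff_exp_le (by linarith)).2 (by linarith [exp_one_lt_d9])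
  rw [sum_congr rfl hterm, sum_add_distrib]
  linarith [sum_Icc_inv_le_one_add_log m, sum_Icc_inv_sub_le hmp]
end

section
/- For every real number a > 1 there exists a finite constant C_a > 0, depending only on a, such that for every real number p ≥ 3, with k_p := ⌊(p+1)/2⌋, one has Σ_{k=0}^{k_p−1} C(p−2,k) B(a(k+1), a(p−k−1)) ≤ C_a (ap)^{−a}. -/
open Real Finset

/-!
Bound `C(p-2,k)` by `C(m,k)` with `m = ⌈p-2⌉`, write the sum of Beta integrals as one integral
over `[0,1]` and split it at `1/2`. On `[0,1/2]` the binomial theorem bounds the integrand by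
`2 t^(a-1) (t^a + (1-t)^a)^m ≤ 2 t^(a-1) exp(-δ m t)` with `δ = 1 - 2^(1-a)`, and the Gamma
integral turns this into `O(p^(-a))`. On `[1/2,1]` the restriction `k < k_p` makes every integrand
at most `4 · 2^a · 2^(-ap)`, which beats the total `2^(p-1)` of the binomial coefficients.
-/

open intervalIntegral

lemma genBinom_natCast (m k : ℕ) : genBinom m k = m.choose k := by
  rw [Nat.cast_choose_eq_descPochhammer_div, descPochhammer_eval_eq_prod_range]
  rfl

lemma genBinom_le_genBinom {q r : ℝ} {k : ℕ} (hq : (k : ℝ) - 1 ≤ q) (hqr : q ≤ r) :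
    genBinom q k ≤ genBinom r k := by
  unfold genBinom
  gcongr ?_ / _
  refine prod_le_prod (fun i hi => ?_) (fun i _ => by linarith)
  have : (i : ℝ) + 1 ≤ k := by exact_mod_cast mem_range.mp hi
  linarith

lemma betaFn_nonneg (x y : ℝ) : 0 ≤ betaFn x y :=
  integral_nonneg zero_le_one fun t ht =>
    mul_nonneg (rpow_nonneg ht.1 _) (rpow_nonneg (by linarith [ht.2]) _)

lemma continuous_rpow_mul_one_sub_rpow {x y : ℝ} (hx : 0 ≤ x) (hy : 0 ≤ y) :
    Continuous fun t : ℝ => t ^ x * (1 - t) ^ y :=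
  (continuous_rpow_const hx).mul
    ((continuous_rpow_const hy).comp (continuous_const.sub continuous_id))

lemma rpow_add_one_sub_rpow_le {a t : ℝ} (ha : 1 ≤ a) (ht₀ : 0 ≤ t) (ht : t ≤ 1 / 2) :
    t ^ a + (1 - t) ^ a ≤ 1 - (1 - (1 / 2) ^ (a - 1)) * t := by
  have h₁ : t ^ a ≤ (1 / 2) ^ (a - 1) * t := by
    calc t ^ a = t ^ (a - 1) * t := by
          rw [← rpow_add_one' ht₀ (by linarith), sub_add_cancel]
      _ ≤ (1 / 2) ^ (a - 1) * t := by gcongr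
  have h₂ : (1 - t) ^ a ≤ 1 - t := rpow_le_self_of_le_one (by linarith) (by linarith) ha
  linarith

lemma rpow_mul_natCast_add_one_sub_one {a t : ℝ} (ha : 1 ≤ a) (ht : 0 ≤ t) (k : ℕ) :
    t ^ (a * (k + 1) - 1) = t ^ (a - 1) * (t ^ a) ^ k := by
  rw [← rpow_mul_natCast ht, ← rpow_add_of_nonneg ht (by linarith) (by positivity)]
  ring_nf

lemma one_sub_rpow_le_two_mul_pow {a y t : ℝ} {l : ℕ} (hy : a * l ≤ y) (ht₀ : 0 ≤ t)
    (ht : t ≤ 1 / 2) : (1 - t) ^ (y - 1) ≤ 2 * ((1 - t) ^ a) ^ l := by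
  have hpos : 0 < 1 - t := by linarith
  calc (1 - t) ^ (y - 1) ≤ (1 - t) ^ (a * l - 1) :=
        rpow_le_rpow_of_exponent_ge hpos (by linarith) (by linarith)
    _ = (1 - t)⁻¹ * ((1 - t) ^ a) ^ l := by
        rw [rpow_sub_one hpos.ne', rpow_mul_natCast hpos.le, div_eq_inv_mul]
    _ ≤ 2 * ((1 - t) ^ a) ^ l := by
        gcongr
        rw [inv_le_comm₀ hpos two_pos]
        linarith

lemma rpow_mul_one_sub_rpow_le_of_half_le {x y t : ℝ} (hx : 1 ≤ x) (hy : 1 ≤ y)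
    (ht : 1 / 2 ≤ t) (ht₁ : t ≤ 1) :
    t ^ (x - 1) * (1 - t) ^ (y - 1) ≤ (1 / 2) ^ (min (x + y) (2 * y) - 2) := by
  have ht₀ : 0 ≤ t := by linarith
  have hs₀ : 0 ≤ 1 - t := by linarith
  have hprod : t * (1 - t) ≤ (1 / 2) ^ (2 : ℝ) := by
    rw [rpow_two]; nlinarith
  rcases le_total x y with hxy | hxy
  · calc t ^ (x - 1) * (1 - t) ^ (y - 1) = (t * (1 - t)) ^ (x - 1) * (1 - t) ^ (y - x) := by
          rw [mul_rpow ht₀ hs₀, mul_assoc,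
            ← rpow_add_of_nonneg hs₀ (by linarith) (by linarith)]
          ring_nf
      _ ≤ ((1 / 2) ^ (2 : ℝ)) ^ (x - 1) * (1 / 2) ^ (y - x) := by
          gcongr
          linarith
      _ = (1 / 2) ^ (min (x + y) (2 * y) - 2) := by
          rw [← rpow_mul (by norm_num), ← rpow_add (by norm_num), min_eq_left (by linarith)]
          ring_nf
  · calc t ^ (x - 1) * (1 - t) ^ (y - 1) = (t * (1 - t)) ^ (y - 1) * t ^ (x - y) := by
          rw [mul_rpow ht₀ hs₀, mul_right_comm,
            ← rpow_add_of_nonneg ht₀ (by linarith) (by linarith)]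
          ring_nf
      _ ≤ ((1 / 2) ^ (2 : ℝ)) ^ (y - 1) * 1 := by
          gcongr
          exact rpow_le_one ht₀ ht₁ (by linarith)
      _ = (1 / 2) ^ (min (x + y) (2 * y) - 2) := by
          rw [← rpow_mul (by norm_num), mul_one, min_eq_right (by linarith)]
          ring_nf

lemma intervalIntegral_rpow_mul_exp_neg_le {a c M : ℝ} (ha : 0 < a) (hc : 0 < c) (hM : 0 ≤ M) :
    ∫ t in (0 : ℝ)..M, t ^ (a - 1) * exp (-(c * t)) ≤ (1 / c) ^ a * Gamma a := by
  have key := integral_rpow_mul_exp_neg_mul_Ioi ha hc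
  have hint : MeasureTheory.IntegrableOn (fun t ↦ t ^ (a - 1) * exp (-(c * t))) (Set.Ioi 0) :=
    .of_integral_ne_zero (by rw [key]; positivity)
  rw [intervalIntegral.integral_of_le hM, ← key]
  refine MeasureTheory.setIntegral_mono_set hint ?_ Set.Ioc_subset_Ioi_self.eventuallyLE
  filter_upwards [MeasureTheory.ae_restrict_mem measurableSet_Ioi] with t ht
  exact mul_nonneg (rpow_nonneg (le_of_lt ht) _) (exp_nonneg _)

lemma exp_neg_mul_le_rpow_neg {A c p : ℝ} (hA : 0 < A) (hc : 0 < c) (hp : 0 < p) :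
    exp (-(c * p)) ≤ exp (A * (log (A / c) - 1)) * p ^ (-A) := by
  rw [rpow_neg hp.le, rpow_def_of_pos hp, ← exp_neg, ← exp_add, exp_le_exp]
  have key : log (p * (c / A)) ≤ p * (c / A) - 1 := log_le_sub_one_of_pos (by positivity)
  rw [log_mul hp.ne' (by positivity), log_div hc.ne' hA.ne', log_div hA.ne' hc.ne'] at *
  have := mul_le_mul_of_nonneg_left key hA.le
  field_simp at this ⊢
  nlinarith

lemma two_rpow_sub_mul_le {a p : ℝ} (ha : 1 < a) (hp : 0 < p) :
    (2 : ℝ) ^ (p - a * (p - 1))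
      ≤ 2 ^ a * exp (a * (log (a / ((a - 1) * log 2)) - 1)) * p ^ (-a) := by
  have hc : 0 < (a - 1) * log 2 := mul_pos (by linarith) (log_pos one_lt_two)
  calc (2 : ℝ) ^ (p - a * (p - 1)) = 2 ^ a * exp (-((a - 1) * log 2 * p)) := by
        rw [rpow_def_of_pos two_pos, rpow_def_of_pos two_pos, ← exp_add]
        ring_nf
    _ ≤ _ := (mul_le_mul_of_nonneg_left (exp_neg_mul_le_rpow_neg (by linarith) hc hp)
          (by positivity)).trans_eq (mul_assoc _ _ _).symm

noncomputable def binomBetaIntegrand (a p : ℝ) (m K : ℕ) (t : ℝ) : ℝ :=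
  ∑ k ∈ range K, (m.choose k : ℝ) * (t ^ (a * (k + 1) - 1) * (1 - t) ^ (a * (p - k - 1) - 1))

lemma continuous_rpow_mul_one_sub_rpow_of_mem_range {a p : ℝ} {K k : ℕ} (ha : 1 ≤ a)
    (hp : 3 ≤ p) (hKp : 2 * (K : ℝ) ≤ p + 1) (hk : k ∈ range K) :
    Continuous fun t : ℝ => t ^ (a * (k + 1) - 1) * (1 - t) ^ (a * (p - k - 1) - 1) := by
  have : (k : ℝ) + 1 ≤ K := by exact_mod_cast mem_range.mp hk
  exact continuous_rpow_mul_one_sub_rpow (by nlinarith) (by nlinarith)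

lemma continuous_binomBetaIntegrand {a p : ℝ} {m K : ℕ} (ha : 1 ≤ a) (hp : 3 ≤ p)
    (hKp : 2 * (K : ℝ) ≤ p + 1) : Continuous (binomBetaIntegrand a p m K) :=
  continuous_finsetSum _ fun _ hk =>
    continuous_const.mul (continuous_rpow_mul_one_sub_rpow_of_mem_range ha hp hKp hk)

lemma sum_choose_mul_betaFn_eq_integral {a p : ℝ} {m K : ℕ} (ha : 1 ≤ a) (hp : 3 ≤ p)
    (hKp : 2 * (K : ℝ) ≤ p + 1) :
    ∑ k ∈ range K, (m.choose k : ℝ) * betaFn (a * (k + 1)) (a * (p - k - 1))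
      = ∫ t in (0 : ℝ)..1, binomBetaIntegrand a p m K t := by
  unfold binomBetaIntegrand
  rw [integral_finsetSum fun k hk =>
    ((continuous_rpow_mul_one_sub_rpow_of_mem_range ha hp hKp hk).intervalIntegrable _ _).const_mul
      _]
  simp_rw [integral_const_mul]
  rfl

lemma binomBetaIntegrand_le_exp {a p t : ℝ} {m K : ℕ} (ha : 1 ≤ a) (hm : (m : ℝ) ≤ p - 1)
    (hK : K ≤ m + 1) (ht₀ : 0 ≤ t) (ht : t ≤ 1 / 2) :
    binomBetaIntegrand a p m K t
      ≤ 2 * t ^ (a - 1) * exp (-((1 - (1 / 2) ^ (a - 1)) * m * t)) := by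
  set δ := 1 - (1 / 2 : ℝ) ^ (a - 1)
  have h1t : 0 ≤ 1 - t := by linarith
  have hbase : 0 ≤ t ^ a + (1 - t) ^ a := by positivity
  calc _ ≤ ∑ k ∈ range (m + 1),
          (m.choose k : ℝ) * (t ^ (a - 1) * (t ^ a) ^ k * (2 * ((1 - t) ^ a) ^ (m - k))) := by
        refine (sum_le_sum_of_subset_of_nonneg (range_subset_range.mpr hK)
          fun k _ _ => by positivity).trans' (sum_le_sum fun k hk => ?_)
        have hkm : k ≤ m := Nat.lt_succ_iff.mp (lt_of_lt_of_le (mem_range.mp hk) hK)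
        rw [rpow_mul_natCast_add_one_sub_one ha ht₀]
        gcongr
        refine one_sub_rpow_le_two_mul_pow ?_ ht₀ ht
        rw [Nat.cast_sub hkm]
        nlinarith
      _ = 2 * t ^ (a - 1) * (t ^ a + (1 - t) ^ a) ^ m := by
        rw [add_pow, mul_sum]
        refine sum_congr rfl fun k _ => by ring
      _ ≤ 2 * t ^ (a - 1) * (1 - δ * t) ^ m := by
        gcongr
        exact rpow_add_one_sub_rpow_le ha ht₀ ht
      _ ≤ 2 * t ^ (a - 1) * exp (-(δ * t)) ^ m := by
        gcongr
        · exact hbase.trans (rpow_add_one_sub_rpow_le ha ht₀ ht)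
        · exact one_sub_le_exp_neg _
      _ = 2 * t ^ (a - 1) * exp (-(δ * m * t)) := by
        rw [← exp_nat_mul]; ring_nf

lemma binomBetaIntegrand_le_of_half_le {a p t : ℝ} {m K : ℕ} (ha : 1 ≤ a) (hp : 3 ≤ p)
    (hm : (m : ℝ) ≤ p - 1) (hK : K ≤ m + 1) (hKp : 2 * (K : ℝ) ≤ p + 1)
    (ht : 1 / 2 ≤ t) (ht₁ : t ≤ 1) :
    binomBetaIntegrand a p m K t ≤ 2 ^ (p - 1) * (1 / 2) ^ (a * (p - 1) - 2) := by
  have hchoose : ∑ k ∈ range K, (m.choose k : ℝ) ≤ 2 ^ (p - 1) :=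
    calc ∑ k ∈ range K, (m.choose k : ℝ) ≤ ∑ k ∈ range (m + 1), (m.choose k : ℝ) :=
          sum_le_sum_of_subset_of_nonneg (range_subset_range.mpr hK) fun _ _ _ => by positivity
      _ = 2 ^ (m : ℝ) := by rw [rpow_natCast]; exact_mod_cast Nat.sum_range_choose m
      _ ≤ 2 ^ (p - 1) := rpow_le_rpow_of_exponent_le one_le_two hm
  refine (sum_le_sum fun k hk => ?_).trans ((sum_mul ..).symm.trans_le
    (mul_le_mul_of_nonneg_right hchoose (by positivity)))
  have hk : 2 * (k : ℝ) + 2 ≤ p + 1 := by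
    have : (k : ℝ) + 1 ≤ K := by exact_mod_cast mem_range.mp hk
    linarith
  gcongr
  refine (rpow_mul_one_sub_rpow_le_of_half_le (by nlinarith) (by nlinarith) ht ht₁).trans ?_
  refine rpow_le_rpow_of_exponent_ge (by norm_num) (by norm_num) ?_
  refine sub_le_sub_right (le_min ?_ ?_) 2 <;> nlinarith

lemma integral_binomBetaIntegrand_le_of_le_half {a p : ℝ} {m K : ℕ} (ha : 1 < a) (hp : 3 ≤ p)
    (hmp : p ≤ 3 * m) (hm : (m : ℝ) ≤ p - 1) (hK : K ≤ m + 1)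
    (hKp : 2 * (K : ℝ) ≤ p + 1) :
    ∫ t in (0 : ℝ)..1 / 2, binomBetaIntegrand a p m K t
      ≤ 2 * (3 / (1 - (1 / 2) ^ (a - 1))) ^ a * Gamma a * p ^ (-a) := by
  set δ := 1 - (1 / 2 : ℝ) ^ (a - 1) with hδ_def
  have hδ : 0 < δ := sub_pos.mpr (rpow_lt_one (by norm_num) (by norm_num) (by linarith))
  have hp₀ : 0 < p := by linarith
  calc ∫ t in (0 : ℝ)..1 / 2, binomBetaIntegrand a p m K t
      ≤ ∫ t in (0 : ℝ)..1 / 2, 2 * (t ^ (a - 1) * exp (-(δ / 3 * p * t))) := by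
        refine integral_mono_on (by norm_num)
          ((continuous_binomBetaIntegrand ha.le hp hKp).intervalIntegrable _ _)
          ((continuous_const.mul ((continuous_rpow_const (by linarith)).mul
            (by fun_prop))).intervalIntegrable _ _) fun t ht => ?_
        refine (binomBetaIntegrand_le_exp ha.le hm hK ht.1 ht.2).trans ?_
        rw [mul_assoc]
        refine mul_le_mul_of_nonneg_left (mul_le_mul_of_nonneg_left ?_ (rpow_nonneg ht.1 _))
          zero_le_two
        rw [← hδ_def, exp_le_exp]
        nlinarith [mul_nonneg (mul_nonneg hδ.le (by linarith : 0 ≤ 3 * (m : ℝ) - p)) ht.1]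
    _ ≤ 2 * ((1 / (δ / 3 * p)) ^ a * Gamma a) := by
        rw [integral_const_mul]
        gcongr
        exact intervalIntegral_rpow_mul_exp_neg_le (by linarith) (by positivity) (by norm_num)
    _ = 2 * (3 / δ) ^ a * Gamma a * p ^ (-a) := by
        rw [show 1 / (δ / 3 * p) = 3 / δ * p⁻¹ by field_simp, mul_rpow (by positivity)
          (by positivity), inv_rpow hp₀.le, ← rpow_neg hp₀.le]
        ring

lemma integral_binomBetaIntegrand_le_of_half_le {a p : ℝ} {m K : ℕ} (ha : 1 ≤ a)
    (hp : 3 ≤ p) (hm : (m : ℝ) ≤ p - 1) (hK : K ≤ m + 1) (hKp : 2 * (K : ℝ) ≤ p + 1) :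
    ∫ t in (1 / 2 : ℝ)..1, binomBetaIntegrand a p m K t ≤ 2 ^ (p - a * (p - 1)) :=
  calc ∫ t in (1 / 2 : ℝ)..1, binomBetaIntegrand a p m K t
      ≤ ∫ t in (1 / 2 : ℝ)..1, 2 ^ (p - 1) * (1 / 2 : ℝ) ^ (a * (p - 1) - 2) :=
        integral_mono_on (by norm_num)
          ((continuous_binomBetaIntegrand ha hp hKp).intervalIntegrable _ _)
          intervalIntegrable_const
          fun t ht => binomBetaIntegrand_le_of_half_le ha hp hm hK hKp ht.1 ht.2
    _ = 2 ^ (p - a * (p - 1)) := by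
        rw [integral_const, smul_eq_mul, one_div, inv_rpow two_pos.le, ← rpow_neg two_pos.le,
          show (1 : ℝ) - 2⁻¹ = 2 ^ (-1 : ℝ) by norm_num, ← rpow_add two_pos,
          ← rpow_add two_pos]
        ring_nf

lemma sum_choose_mul_betaFn_le {a p : ℝ} {m K : ℕ} (ha : 1 < a) (hp : 3 ≤ p)
    (hmp : p ≤ 3 * m) (hm : (m : ℝ) ≤ p - 1) (hK : K ≤ m + 1)
    (hKp : 2 * (K : ℝ) ≤ p + 1) :
    ∑ k ∈ range K, (m.choose k : ℝ) * betaFn (a * (k + 1)) (a * (p - k - 1))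
      ≤ 2 * (3 / (1 - (1 / 2) ^ (a - 1))) ^ a * Gamma a * p ^ (-a) + 2 ^ (p - a * (p - 1)) := by
  have hF := continuous_binomBetaIntegrand (m := m) ha.le hp hKp
  rw [sum_choose_mul_betaFn_eq_integral ha.le hp hKp, ← integral_add_adjacent_intervals
    (hF.intervalIntegrable 0 (1 / 2)) (hF.intervalIntegrable (1 / 2) 1)]
  exact add_le_add (integral_binomBetaIntegrand_le_of_le_half ha hp hmp hm hK hKp)
    (integral_binomBetaIntegrand_le_of_half_le ha.le hp hm hK hKp)

/-- **Lemma 3.3, inequality (3.7).** For every `a > 1` there is a constant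
`C_a > 0` such that for every real `p ≥ 3` (`k_p = ⌊(p+1)/2⌋`):
`Σ_{k=0}^{k_p-1} C(p-2,k) B(a(k+1), a(p-k-1)) ≤ C_a (ap)^{-a}`. -/
theorem beta_binomial_sum_power_bound' (a : ℝ) (ha : 1 < a) :
    ∃ C : ℝ, 0 < C ∧ ∀ p : ℝ, 3 ≤ p →
      ∑ k ∈ Finset.range ⌊(p + 1) / 2⌋₊,
          genBinom (p - 2) k * betaFn (a * (k + 1)) (a * (p - k - 1))
        ≤ C * (a * p) ^ (-a) := by
  have ha₀ : 0 < a := by linarith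
  have hδ : 0 < 1 - (1 / 2 : ℝ) ^ (a - 1) :=
    sub_pos.mpr (rpow_lt_one (by norm_num) (by norm_num) (by linarith))
  set C₁ := 2 * (3 / (1 - (1 / 2 : ℝ) ^ (a - 1))) ^ a * Gamma a
  set C₂ := 2 ^ a * exp (a * (log (a / ((a - 1) * log 2)) - 1))
  refine ⟨(C₁ + C₂) * a ^ a, by positivity, fun p hp => ?_⟩
  have hp₀ : 0 < p := by linarith
  have hm₁ : p - 2 ≤ ⌈p - 2⌉₊ := Nat.le_ceil _
  have hm₂ : (⌈p - 2⌉₊ : ℝ) < p - 1 := by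
    linarith [Nat.ceil_lt_add_one (by linarith : 0 ≤ p - 2)]
  have hK : (⌊(p + 1) / 2⌋₊ : ℝ) ≤ (p + 1) / 2 := Nat.floor_le (by positivity)
  calc _ ≤ ∑ k ∈ range ⌊(p + 1) / 2⌋₊,
          (⌈p - 2⌉₊.choose k : ℝ) * betaFn (a * (k + 1)) (a * (p - k - 1)) := by
        refine sum_le_sum fun k hk => mul_le_mul_of_nonneg_right ?_ (betaFn_nonneg _ _)
        have : (k : ℝ) + 1 ≤ ⌊(p + 1) / 2⌋₊ := by exact_mod_cast mem_range.mp hk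
        exact (genBinom_le_genBinom (by linarith) hm₁).trans_eq (genBinom_natCast _ _)
    _ ≤ C₁ * p ^ (-a) + C₂ * p ^ (-a) :=
        (sum_choose_mul_betaFn_le ha hp (by linarith) hm₂.le
          (by exact_mod_cast (by linarith : (⌊(p + 1) / 2⌋₊ : ℝ) ≤ ⌈p - 2⌉₊ + 1))
          (by linarith)).trans (add_le_add le_rfl (two_rpow_sub_mul_le ha hp₀))
    _ = (C₁ + C₂) * a ^ a * (a * p) ^ (-a) := by
        rw [mul_rpow ha₀.le hp₀.le, rpow_neg ha₀.le]
        field_simp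
end

section
/- Let N ≥ 2 be an integer, let 1 < γ < 2, set ν := 2 − 2/γ ∈ (0,1), and let b : [−1,1] → [0,∞) be measurable with ∫₀^π b(cos θ) sin^{N−2ν} θ dθ < ∞ (which implies ∫₀^π b(cos θ) sin^N θ dθ < ∞). For real p ≥ 3 define e_p := ∫₀^π ( ∫₀¹ t (1 − (sin²θ / 2) t)^{p−2} dt ) b(cos θ) sin^N θ dθ. Then p^ν e_p → 0 as p → ∞. -/
open Real Filter MeasureTheory intervalIntegral

/-!
Write `s = sin² θ / 2` and `k_q(s) = ∫₀¹ t (1 - s t)^q dt`. Then `k_q(s) ≤ 1/2`, and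
`q s k_q(s) ≤ 1` because `(1 - s t)^q ≤ exp (-q s t)` and `u exp (-u) ≤ 1`. Hence, for `p ≥ 3`,
`(p s)^ν k_{p-2}(s) ≤ (1 + p s) k_{p-2}(s) ≤ 4`, while `(p s)^ν k_{p-2}(s) ≤ 3 (p s)^{ν-1} → 0`
for fixed `s > 0` since `ν < 1`. As `p^ν sin^N θ = (p s)^ν · 2^ν sin^{N-2ν} θ`, the integrand is a
bounded, pointwise vanishing factor times an integrable weight, and dominated convergence applies.
-/

open Set Topology

noncomputable def cutoffKernel (q s : ℝ) : ℝ :=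
  ∫ t in (0:ℝ)..1, t * (1 - s * t) ^ q

section CutoffKernel

variable {q s : ℝ}

lemma one_sub_mul_nonneg_of_mem_Icc {t : ℝ} (hs0 : 0 ≤ s) (hs1 : s ≤ 1) (ht : t ∈ Icc (0:ℝ) 1) :
    0 ≤ 1 - s * t := by
  nlinarith [ht.1, ht.2]

lemma continuous_cutoffKernel_integrand (hq : 0 ≤ q) :
    Continuous fun x : ℝ × ℝ => x.2 * (1 - x.1 * x.2) ^ q :=
  continuous_snd.mul ((continuous_rpow_const hq).comp (by fun_prop))

lemma continuous_cutoffKernel (hq : 0 ≤ q) : Continuous (cutoffKernel q) :=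
  continuous_parametric_intervalIntegral_of_continuous' (continuous_cutoffKernel_integrand hq) 0 1

lemma intervalIntegrable_cutoffKernel_integrand (hq : 0 ≤ q) :
    IntervalIntegrable (fun t => t * (1 - s * t) ^ q) volume 0 1 :=
  ((continuous_cutoffKernel_integrand hq).comp (Continuous.prodMk_right s)).intervalIntegrable 0 1

lemma cutoffKernel_nonneg (hs0 : 0 ≤ s) (hs1 : s ≤ 1) : 0 ≤ cutoffKernel q s :=
  integral_nonneg zero_le_one fun _ ht =>
    mul_nonneg ht.1 (rpow_nonneg (one_sub_mul_nonneg_of_mem_Icc hs0 hs1 ht) _)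

lemma cutoffKernel_le_half (hq : 0 ≤ q) (hs0 : 0 ≤ s) (hs1 : s ≤ 1) :
    cutoffKernel q s ≤ 1 / 2 := by
  calc cutoffKernel q s ≤ ∫ t in (0:ℝ)..1, t := by
        refine integral_mono_on zero_le_one (intervalIntegrable_cutoffKernel_integrand hq)
          (continuous_id.intervalIntegrable 0 1) fun t ht => ?_
        have h0 := one_sub_mul_nonneg_of_mem_Icc hs0 hs1 ht
        exact mul_le_of_le_one_right ht.1 (rpow_le_one h0 (by nlinarith [ht.1]) hq)
    _ = 1 / 2 := by norm_num [integral_id]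

lemma mul_cutoffKernel_le_one (hq : 0 ≤ q) (hs0 : 0 ≤ s) (hs1 : s ≤ 1) :
    q * s * cutoffKernel q s ≤ 1 := by
  have hint := intervalIntegrable_cutoffKernel_integrand hq (s := s)
  rw [cutoffKernel, ← intervalIntegral.integral_const_mul]
  calc ∫ t in (0:ℝ)..1, q * s * (t * (1 - s * t) ^ q) ≤ ∫ _ in (0:ℝ)..1, (1:ℝ) := by
        refine integral_mono_on zero_le_one (hint.const_mul _) intervalIntegrable_const
          fun t ht => ?_
        have hexp : (1 - s * t) ^ q ≤ exp (-(q * s * t)) := by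
          calc (1 - s * t) ^ q ≤ exp (-(s * t)) ^ q :=
                rpow_le_rpow (one_sub_mul_nonneg_of_mem_Icc hs0 hs1 ht) (one_sub_le_exp_neg _) hq
            _ = exp (-(q * s * t)) := by rw [← exp_mul]; ring_nf
        calc q * s * (t * (1 - s * t) ^ q) ≤ q * s * t * exp (-(q * s * t)) := by
              rw [← mul_assoc]
              exact mul_le_mul_of_nonneg_left hexp (by have := ht.1; positivity)
          _ ≤ exp (-1) := mul_exp_neg_le_exp_neg_one _
          _ ≤ 1 := exp_le_one_iff.mpr (by norm_num)
    _ = 1 := by simp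

end CutoffKernel

lemma rpow_le_one_add {x ν : ℝ} (hx : 0 ≤ x) (hν0 : 0 ≤ ν) (hν1 : ν ≤ 1) : x ^ ν ≤ 1 + x := by
  rcases le_total x 1 with h | h
  · linarith [rpow_le_one hx h hν0]
  · calc x ^ ν ≤ x ^ (1:ℝ) := rpow_le_rpow_of_exponent_le h hν1
      _ ≤ 1 + x := by rw [rpow_one]; linarith

section Weighted

variable {ν p s : ℝ}

lemma rpow_mul_cutoffKernel_nonneg (hp : 0 ≤ p) (hs0 : 0 ≤ s) (hs1 : s ≤ 1) :
    0 ≤ (p * s) ^ ν * cutoffKernel (p - 2) s :=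
  mul_nonneg (rpow_nonneg (mul_nonneg hp hs0) _) (cutoffKernel_nonneg hs0 hs1)

lemma mul_cutoffKernel_le_three (hp : 3 ≤ p) (hs0 : 0 ≤ s) (hs1 : s ≤ 1) :
    p * s * cutoffKernel (p - 2) s ≤ 3 := by
  have hK := cutoffKernel_nonneg (q := p - 2) hs0 hs1
  have h := mul_cutoffKernel_le_one (by linarith) hs0 hs1 (q := p - 2)
  nlinarith [mul_nonneg hs0 hK]

lemma rpow_mul_cutoffKernel_le (hν0 : 0 ≤ ν) (hν1 : ν ≤ 1) (hp : 3 ≤ p) (hs0 : 0 ≤ s)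
    (hs1 : s ≤ 1) : (p * s) ^ ν * cutoffKernel (p - 2) s ≤ 4 := by
  have hK := cutoffKernel_nonneg (q := p - 2) hs0 hs1
  calc (p * s) ^ ν * cutoffKernel (p - 2) s
      ≤ (1 + p * s) * cutoffKernel (p - 2) s :=
        mul_le_mul_of_nonneg_right (rpow_le_one_add (by nlinarith) hν0 hν1) hK
    _ = cutoffKernel (p - 2) s + p * s * cutoffKernel (p - 2) s := by ring
    _ ≤ 4 := by
      linarith [cutoffKernel_le_half (by linarith) hs0 hs1 (q := p - 2),
        mul_cutoffKernel_le_three hp hs0 hs1]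

lemma tendsto_rpow_mul_cutoffKernel (hν1 : ν < 1) (hs0 : 0 < s) (hs1 : s ≤ 1) :
    Tendsto (fun p => (p * s) ^ ν * cutoffKernel (p - 2) s) atTop (𝓝 0) := by
  have hlim : Tendsto (fun p => 3 * (p * s) ^ (ν - 1)) atTop (𝓝 0) := by
    have := (tendsto_rpow_neg_atTop (by linarith : 0 < 1 - ν)).comp
      (tendsto_id.atTop_mul_const hs0)
    simpa [neg_sub] using this.const_mul 3
  refine squeeze_zero' ?_ ?_ hlim
  · filter_upwards [eventually_ge_atTop 0] with p hp
    exact rpow_mul_cutoffKernel_nonneg hp hs0.le hs1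
  · filter_upwards [eventually_ge_atTop 3] with p hp
    have hps : 0 < p * s := mul_pos (by linarith) hs0
    calc (p * s) ^ ν * cutoffKernel (p - 2) s
        = (p * s) ^ (ν - 1) * (p * s * cutoffKernel (p - 2) s) := by
          rw [rpow_sub_one hps.ne']; field_simp
      _ ≤ (p * s) ^ (ν - 1) * 3 :=
          mul_le_mul_of_nonneg_left (mul_cutoffKernel_le_three hp hs0.le hs1) (by positivity)
      _ = 3 * (p * s) ^ (ν - 1) := mul_comm _ _

end Weighted

lemma tendsto_integral_mul_of_bounded {ι α : Type*} [MeasurableSpace α] {μ : Measure α}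
    {l : Filter ι} [l.IsCountablyGenerated] {g : ι → α → ℝ} {w : α → ℝ} {C : ℝ}
    (hw : Integrable w μ) (hg_meas : ∀ᶠ i in l, AEStronglyMeasurable (g i) μ)
    (hg_bound : ∀ᶠ i in l, ∀ᵐ x ∂μ, |g i x| ≤ C)
    (hg_lim : ∀ᵐ x ∂μ, Tendsto (fun i => g i x) l (𝓝 0)) :
    Tendsto (fun i => ∫ x, g i x * w x ∂μ) l (𝓝 0) := by
  have := tendsto_integral_filter_of_dominated_convergence (F := fun i x => g i x * w x)
    (f := fun _ => 0) (fun x => C * ‖w x‖)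
    (hg_meas.mono fun i hi => hi.mul hw.aestronglyMeasurable) ?_ (hw.norm.const_mul C) ?_
  · simpa using this
  · filter_upwards [hg_bound] with i hi
    filter_upwards [hi] with x hx
    rw [norm_mul]
    exact mul_le_mul_of_nonneg_right hx (norm_nonneg _)
  · filter_upwards [hg_lim] with x hx
    simpa using hx.mul_const (w x)

lemma two_sub_two_div_mem_Ico {γ : ℝ} (hγ1 : 1 ≤ γ) (hγ2 : γ < 2) : 2 - 2 / γ ∈ Ico 0 1 :=
  ⟨by rw [sub_nonneg, div_le_iff₀ (by linarith)]; linarith,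
    by rw [sub_lt_comm, lt_div_iff₀ (by linarith)]; linarith⟩

lemma half_sin_sq_mem_Ioc {θ : ℝ} (hθ : θ ∈ Ioo 0 π) : sin θ ^ 2 / 2 ∈ Ioc 0 1 :=
  ⟨by have := sin_pos_of_pos_of_lt_pi hθ.1 hθ.2; positivity, by nlinarith [sin_sq_le_one θ]⟩

lemma rpow_mul_pow_eq_rpow_mul_half_sq {ν p x : ℝ} (N : ℕ) (hp : 0 ≤ p) (hx : 0 < x) :
    p ^ ν * x ^ N = (p * (x ^ 2 / 2)) ^ ν * (2 ^ ν * x ^ ((N : ℝ) - 2 * ν)) := by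
  have hsq : (2:ℝ) ^ ν * (x ^ 2 / 2) ^ ν = x ^ (2 * ν) := by
    rw [← mul_rpow zero_le_two (by positivity), mul_div_cancel₀ _ two_ne_zero,
      ← rpow_natCast, ← rpow_mul hx.le, Nat.cast_ofNat]
  calc p ^ ν * x ^ N = p ^ ν * (x ^ (2 * ν) * x ^ ((N : ℝ) - 2 * ν)) := by
        rw [← rpow_add hx, add_sub_cancel, rpow_natCast]
    _ = (p * (x ^ 2 / 2)) ^ ν * (2 ^ ν * x ^ ((N : ℝ) - 2 * ν)) := by
        rw [← hsq, mul_rpow hp (by positivity)]; ring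

theorem cutoff_remainder_tendsto_zero_weighted_general (N : ℕ)
    (γ : ℝ) (hγ1 : 1 < γ) (hγ2 : γ < 2) (ν : ℝ) (hν : ν = 2 - 2 / γ)
    (b : ℝ → ℝ)
    (hbint : IntervalIntegrable
      (fun θ => b (Real.cos θ) * Real.sin θ ^ ((N : ℝ) - 2 * ν)) volume 0 π) :
    Tendsto (fun p : ℝ =>
        p ^ ν *
          ∫ θ in (0:ℝ)..π,
            (∫ t in (0:ℝ)..1, t * (1 - Real.sin θ ^ 2 / 2 * t) ^ (p - 2)) *
              (b (Real.cos θ) * Real.sin θ ^ N))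
      atTop (nhds 0) := by
  obtain ⟨hν0, hν1⟩ := hν ▸ two_sub_two_div_mem_Ico hγ1.le hγ2
  set s : ℝ → ℝ := fun θ => sin θ ^ 2 / 2
  have hw := (((intervalIntegrable_iff_integrableOn_Ioc_of_le pi_pos.le).mp hbint).mono_set
    Ioo_subset_Ioc_self).const_mul (2 ^ ν)
  have hlim := tendsto_integral_mul_of_bounded (μ := volume.restrict (Ioo 0 π)) (l := atTop)
    (g := fun p θ => (p * s θ) ^ ν * cutoffKernel (p - 2) (s θ)) (C := 4) hw ?_ ?_ ?_
  · refine hlim.congr' ?_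
    filter_upwards [eventually_ge_atTop 0] with p hp
    rw [← intervalIntegral.integral_const_mul, integral_of_le pi_pos.le,
      integral_Ioc_eq_integral_Ioo]
    refine setIntegral_congr_fun measurableSet_Ioo fun θ hθ => ?_
    have := rpow_mul_pow_eq_rpow_mul_half_sq (ν := ν) N hp (sin_pos_of_pos_of_lt_pi hθ.1 hθ.2)
    change _ = p ^ ν * (cutoffKernel (p - 2) (s θ) * _)
    linear_combination (-(cutoffKernel (p - 2) (s θ) * b (cos θ))) * this
  · filter_upwards [eventually_ge_atTop 3] with p hp
    have hK := continuous_cutoffKernel (q := p - 2) (by linarith)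
    exact (by fun_prop : Measurable fun θ =>
      (p * s θ) ^ ν * cutoffKernel (p - 2) (s θ)).aestronglyMeasurable
  · filter_upwards [eventually_ge_atTop 3] with p hp
    refine ae_restrict_of_forall_mem measurableSet_Ioo fun θ hθ => ?_
    obtain ⟨hs0, hs1⟩ := half_sin_sq_mem_Ioc hθ
    rw [abs_of_nonneg (rpow_mul_cutoffKernel_nonneg (by linarith) hs0.le hs1)]
    exact rpow_mul_cutoffKernel_le hν0 hν1.le hp hs0.le hs1
  · refine ae_restrict_of_forall_mem measurableSet_Ioo fun θ hθ => ?_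
    exact tendsto_rpow_mul_cutoffKernel hν1 (half_sin_sq_mem_Ioc hθ).1 (half_sin_sq_mem_Ioc hθ).2

/-- **Lemma 3.4, second part, under (H2).** Let `N ≥ 2`, `1 < γ < 2`,
`ν = 2 - 2/γ ∈ (0,1)`, and let `b : [-1,1] → [0,∞)` be measurable with
`∫₀^π b(cos θ) sin^{N-2ν} θ dθ < ∞`. For real `p ≥ 3` set
`e_p = ∫₀^π (∫₀¹ t (1 - (sin²θ/2) t)^{p-2} dt) b(cos θ) sin^N θ dθ`.
Then `p^ν e_p → 0` as `p → ∞`. -/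
theorem cutoff_remainder_tendsto_zero_weighted (N : ℕ) (hN : 2 ≤ N)
    (γ : ℝ) (hγ1 : 1 < γ) (hγ2 : γ < 2) (ν : ℝ) (hν : ν = 2 - 2 / γ)
    (b : ℝ → ℝ) (hbm : Measurable b) (hb0 : ∀ x, 0 ≤ b x)
    (hbint : IntervalIntegrable
      (fun θ => b (Real.cos θ) * Real.sin θ ^ ((N : ℝ) - 2 * ν)) volume 0 π) :
    Tendsto (fun p : ℝ =>
        p ^ ν *
          ∫ θ in (0:ℝ)..π,
            (∫ t in (0:ℝ)..1, t * (1 - Real.sin θ ^ 2 / 2 * t) ^ (p - 2)) *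
              (b (Real.cos θ) * Real.sin θ ^ N))
      atTop (nhds 0) :=
  cutoff_remainder_tendsto_zero_weighted_general N γ hγ1 hγ2 ν hν b hbint
end

section
/- Let p ≥ 3 be a real number, k_p := ⌊(p+1)/2⌋, let X, Y ≥ 0 and θ ∈ (0,π), and set E := X cos²(θ/2) + Y sin²(θ/2) and Ē := X sin²(θ/2) + Y cos²(θ/2). Then (1/sin²θ)·( E^p + Ē^p − X^p − Y^p ) ≤ −(1/2)(X^p + Y^p) + (1/2) Σ_{k=1}^{k_p} C(p,k) ( X^k Y^{p−k} + X^{p−k} Y^k ). -/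
open Real Finset

theorem genBinom_one (p : ℝ) : genBinom p 1 = p := by
  simpa [genBinom_zero] using genBinom_succ_mul p 0

/-- Induction on `k - j`, passing from `(j + 1, k - 1)` to `(j, k)`: the ratio picked up is
`(p - j) (p - k + 1) / ((j + 1) k) ≤ 1` because `p ≤ N`. -/
theorem genBinom_le_of_add_eq {p : ℝ} {N j k : ℕ} (hpN : p ≤ N) (hNp : (N : ℝ) ≤ p + 1)
    (hjk : j ≤ k) (hN : j + k = N) : genBinom p k ≤ genBinom p j := by
  obtain ⟨m, rfl⟩ := Nat.exists_eq_add_of_le hjk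
  clear hjk
  induction m using Nat.twoStepInduction generalizing j with
  | zero => simp
  | one =>
    have hN' : (j : ℝ) + (j + 1) = N := by exact_mod_cast hN
    have h := genBinom_succ_mul p j
    have := genBinom_nonneg (p := p) (k := j) (by linarith)
    nlinarith
  | more m ih _ =>
    have hN' : (j : ℝ) + (j + m + 2) = N := by exact_mod_cast hN
    have hIH : genBinom p (j + 1 + m) ≤ genBinom p (j + 1) := ih (j := j + 1) (by omega)
    have hCj := genBinom_nonneg (p := p) (k := j) (by linarith)
    have hstep := genBinom_succ_mul p (j + 1 + m)
    have hfirst := genBinom_succ_mul p j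
    rw [show j + (m + 2) = j + 1 + m + 1 by omega]
    push_cast at hstep hfirst ⊢
    have hpos : (0 : ℝ) < (j + 1 + m + 1) * (j + 1) := by positivity
    refine le_of_mul_le_mul_right ?_ hpos
    calc genBinom p (j + 1 + m + 1) * ((j + 1 + m + 1) * (j + 1))
        = genBinom p (j + 1 + m) * (p - (j + 1 + m)) * (j + 1) := by rw [← hstep]; ring
      _ ≤ genBinom p (j + 1) * (p - (j + 1 + m)) * (j + 1) := by
        gcongr
        linarith
      _ = genBinom p j * ((p - j) * (p - (j + 1 + m))) := by rw [mul_right_comm, hfirst]; ring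
      _ ≤ genBinom p j * ((j + 1 + m + 1) * (j + 1)) := by
        gcongr
        all_goals linarith [(Nat.cast_nonneg j : (0 : ℝ) ≤ j)]

theorem hasDerivAt_sum_genBinom_mul_pow (p y : ℝ) (n : ℕ) :
    HasDerivAt (fun y => ∑ k ∈ range (n + 1), genBinom p k * y ^ k)
      (p * ∑ k ∈ range n, genBinom (p - 1) k * y ^ k) y := by
  refine (HasDerivAt.fun_sum fun k _ =>
    (hasDerivAt_pow k y).const_mul (genBinom p k)).congr_deriv ?_
  rw [sum_range_succ', mul_sum]
  simp only [Nat.cast_zero, zero_mul, mul_zero, add_zero, add_tsub_cancel_right, Nat.cast_succ]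
  refine sum_congr rfl fun k _ => ?_
  rw [← mul_assoc, mul_comm (genBinom p (k + 1)), succ_mul_genBinom_succ]
  ring

theorem one_add_rpow_le_sum_genBinom (n : ℕ) {p x : ℝ} (hnp : n ≤ p) (hpn : p ≤ n + 1)
    (hx : 0 ≤ x) : (1 + x) ^ p ≤ ∑ k ∈ range (n + 2), genBinom p k * x ^ k := by
  induction n generalizing p x with
  | zero =>
    simp only [sum_range_succ, range_one, sum_singleton, genBinom_zero, genBinom_one]
    have := rpow_one_add_le_one_add_mul_self (by linarith : -1 ≤ x) (by simpa using hnp)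
      (by simpa using hpn)
    linarith
  | succ n ih =>
    push_cast at hnp hpn
    let F : ℝ → ℝ := fun y => ∑ k ∈ range (n + 3), genBinom p k * y ^ k - (1 + y) ^ p
    have hF : MonotoneOn F (Set.Ici 0) := by
      refine monotoneOn_of_hasDerivWithinAt_nonneg (convex_Ici 0)
        (f' := fun y => p * (∑ k ∈ range (n + 2), genBinom (p - 1) k * y ^ k - (1 + y) ^ (p - 1)))
        ?_ (fun y hy => ?_) (fun y hy => ?_)
      · exact ContinuousOn.sub (by fun_prop)
          (ContinuousOn.rpow_const (by fun_prop) fun _ _ => Or.inr (by linarith))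
      · rw [interior_Ici] at hy
        refine HasDerivAt.hasDerivWithinAt (((hasDerivAt_sum_genBinom_mul_pow p y (n + 2)).fun_sub
          (((hasDerivAt_id' y).const_add 1).rpow_const (p := p) (Or.inr (by linarith)))).congr_deriv
          (by ring))
      · rw [interior_Ici] at hy
        have := ih (p := p - 1) (by linarith) (by linarith) (le_of_lt hy)
        exact mul_nonneg (by linarith) (sub_nonneg.mpr this)
    have hF0 : F 0 = 0 := by
      simp [F, sum_range_succ', genBinom_zero]
    have := hF Set.self_mem_Ici hx hx
    simp only [hF0, F] at this
    linarith

theorem sum_Ico_genBinom_mul_pow_le {p x : ℝ} (hx0 : 0 ≤ x) (hx1 : x ≤ 1) {N K : ℕ}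
    (hpN : p ≤ N) (hNp : (N : ℝ) ≤ p + 1) (hKN : K ≤ N) (hNK : N ≤ 2 * K + 1) :
    ∑ k ∈ Ico (K + 1) (N + 1), genBinom p k * x ^ k
      ≤ ∑ j ∈ range (K + 1), genBinom p j * x ^ (p - j) := by
  calc ∑ k ∈ Ico (K + 1) (N + 1), genBinom p k * x ^ k
      ≤ ∑ k ∈ Ico (K + 1) (N + 1), genBinom p (N - k) * x ^ (p - (N - k : ℕ)) := by
        refine sum_le_sum fun k hk => ?_
        obtain ⟨hKk, hkN⟩ := mem_Ico.mp hk
        have hcast : ((N - k : ℕ) : ℝ) = N - k := Nat.cast_sub (by omega)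
        have hk : (K : ℝ) + 1 ≤ k := by exact_mod_cast hKk
        have hpow : x ^ k ≤ x ^ (p - (N - k : ℕ)) := by
          rw [← rpow_natCast, hcast]
          exact rpow_le_rpow_of_exponent_ge' hx0 hx1 (by linarith) (by linarith)
        exact mul_le_mul (genBinom_le_of_add_eq hpN hNp (by omega) (by omega)) hpow
          (pow_nonneg hx0 k) (genBinom_nonneg (by rw [hcast]; linarith))
    _ = ∑ j ∈ range (N - K), genBinom p j * x ^ (p - j) := by
        rw [sum_Ico_reflect (fun j => genBinom p j * x ^ (p - j)) _ le_rfl, range_eq_Ico]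
        simp
    _ ≤ ∑ j ∈ range (K + 1), genBinom p j * x ^ (p - j) := by
        refine sum_le_sum_of_subset_of_nonneg (range_subset_range.mpr (by omega)) fun j hj _ => ?_
        have : (j : ℝ) ≤ N := by exact_mod_cast (Nat.lt_succ_iff.mp (mem_range.mp hj)).trans hKN
        exact mul_nonneg (genBinom_nonneg (by linarith)) (rpow_nonneg hx0 _)

theorem one_add_rpow_le {p x : ℝ} (hp : 0 ≤ p) (hx0 : 0 ≤ x) (hx1 : x ≤ 1) :
    (1 + x) ^ p ≤ 1 + x ^ p
      + ∑ k ∈ Icc 1 ⌊(p + 1) / 2⌋₊, genBinom p k * (x ^ (k : ℝ) + x ^ (p - k)) := by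
  set K := ⌊(p + 1) / 2⌋₊
  set n := ⌊p⌋₊
  have hn : (n : ℝ) ≤ p := Nat.floor_le hp
  have hn' : p < n + 1 := Nat.lt_floor_add_one p
  have hK : (K : ℝ) ≤ (p + 1) / 2 := Nat.floor_le (by linarith)
  have hK' : (p + 1) / 2 < K + 1 := Nat.lt_floor_add_one _
  have hKn : K < n + 2 := by exact_mod_cast (by linarith : (K : ℝ) < n + 2)
  have hnK : n < 2 * K + 1 := by exact_mod_cast (by linarith : (n : ℝ) < 2 * K + 1)
  calc (1 + x) ^ p ≤ ∑ k ∈ range (n + 2), genBinom p k * x ^ k :=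
        one_add_rpow_le_sum_genBinom n hn hn'.le hx0
    _ = ∑ k ∈ range (K + 1), genBinom p k * x ^ k
          + ∑ k ∈ Ico (K + 1) (n + 1 + 1), genBinom p k * x ^ k :=
        (sum_range_add_sum_Ico _ (by omega)).symm
    _ ≤ ∑ k ∈ range (K + 1), genBinom p k * x ^ k
          + ∑ k ∈ range (K + 1), genBinom p k * x ^ (p - k) := by
        gcongr
        exact sum_Ico_genBinom_mul_pow_le hx0 hx1 (by push_cast; linarith) (by push_cast; linarith)
          (by omega) (by omega)
    _ = ∑ k ∈ range (K + 1), genBinom p k * (x ^ (k : ℝ) + x ^ (p - k)) := by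
        simp only [← sum_add_distrib, rpow_natCast, mul_add]
    _ = _ := by
        rw [range_eq_Ico, sum_eq_sum_Ico_succ_bot (by omega : 0 < K + 1), Ico_add_one_right_eq_Icc]
        simp [genBinom_zero, add_assoc]

noncomputable def symmBinomSum (p a b : ℝ) : ℝ :=
  ∑ k ∈ Icc 1 ⌊(p + 1) / 2⌋₊,
    genBinom p k * (a ^ (k : ℝ) * b ^ (p - k) + a ^ (p - k) * b ^ (k : ℝ))

theorem symmBinomSum_comm (p a b : ℝ) : symmBinomSum p a b = symmBinomSum p b a :=
  sum_congr rfl fun _ _ => by ring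

theorem symmBinomSum_nonneg {p a b : ℝ} (hp : 0 ≤ p) (ha : 0 ≤ a) (hb : 0 ≤ b) :
    0 ≤ symmBinomSum p a b := by
  refine sum_nonneg fun k hk => mul_nonneg (genBinom_nonneg ?_) (by positivity)
  have : (k : ℝ) ≤ (p + 1) / 2 :=
    (Nat.cast_le.mpr (mem_Icc.mp hk).2).trans (Nat.floor_le (by linarith))
  linarith

theorem add_rpow_le_of_le {p a b : ℝ} (hp : 0 ≤ p) (ha : 0 < a) (hb : 0 ≤ b) (hba : b ≤ a) :
    (a + b) ^ p ≤ a ^ p + b ^ p + symmBinomSum p a b := by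
  set x := b / a
  have hb_eq : b = a * x := by simp only [x]; field_simp
  have hx0 : 0 ≤ x := div_nonneg hb ha.le
  have hx1 : x ≤ 1 := (div_le_one ha).mpr hba
  have hscale : ∀ t : ℝ, a ^ (p - t) * b ^ t = a ^ p * x ^ t := fun t => by
    rw [hb_eq, mul_rpow ha.le hx0, ← mul_assoc, ← rpow_add ha, sub_add_cancel]
  have hsum : symmBinomSum p a b
      = a ^ p * ∑ k ∈ Icc 1 ⌊(p + 1) / 2⌋₊, genBinom p k * (x ^ (k : ℝ) + x ^ (p - k)) := by
    rw [symmBinomSum, mul_sum]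
    refine sum_congr rfl fun k _ => ?_
    have h := hscale (p - k)
    rw [sub_sub_cancel] at h
    rw [h, hscale]
    ring
  calc (a + b) ^ p = a ^ p * (1 + x) ^ p := by
        rw [hb_eq, ← mul_rpow ha.le (by linarith), mul_one_add]
    _ ≤ a ^ p * (1 + x ^ p
          + ∑ k ∈ Icc 1 ⌊(p + 1) / 2⌋₊, genBinom p k * (x ^ (k : ℝ) + x ^ (p - k))) :=
        mul_le_mul_of_nonneg_left (one_add_rpow_le hp hx0 hx1) (rpow_nonneg ha.le p)
    _ = a ^ p + b ^ p + symmBinomSum p a b := by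
        rw [hsum, hb_eq, mul_rpow ha.le hx0]
        ring

theorem add_rpow_le {p a b : ℝ} (hp : 0 < p) (ha : 0 ≤ a) (hb : 0 ≤ b) :
    (a + b) ^ p ≤ a ^ p + b ^ p + symmBinomSum p a b := by
  wlog hba : b ≤ a generalizing a b
  · have := this hb ha (le_of_not_ge hba)
    rwa [add_comm b, add_comm (b ^ p), symmBinomSum_comm] at this
  rcases ha.eq_or_lt with rfl | ha
  · obtain rfl : b = 0 := le_antisymm hba hb
    rw [add_zero, zero_rpow hp.ne', zero_add, zero_add]
    exact symmBinomSum_nonneg hp.le le_rfl le_rfl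
  · exact add_rpow_le_of_le hp.le ha hb hba

theorem symmBinomSum_mul_add_le {p X Y c s : ℝ} (hp : 3 ≤ p) (hX : 0 ≤ X) (hY : 0 ≤ Y)
    (hc0 : 0 ≤ c) (hc1 : c ≤ 1) (hs0 : 0 ≤ s) (hs1 : s ≤ 1) :
    symmBinomSum p (X * c) (Y * s) + symmBinomSum p (X * s) (Y * c)
      ≤ 2 * (c * s) * symmBinomSum p X Y := by
  rw [symmBinomSum, symmBinomSum, symmBinomSum, ← sum_add_distrib, mul_sum]
  refine sum_le_sum fun k hk => ?_
  have hk1 : (1 : ℝ) ≤ k := by exact_mod_cast (mem_Icc.mp hk).1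
  have hpk : 1 ≤ p - k := by
    have : (k : ℝ) ≤ (p + 1) / 2 :=
      (Nat.cast_le.mpr (mem_Icc.mp hk).2).trans (Nat.floor_le (by linarith))
    linarith
  have hcs : c ^ (k : ℝ) * s ^ (p - k) ≤ c * s :=
    mul_le_mul (rpow_le_self_of_le_one hc0 hc1 hk1) (rpow_le_self_of_le_one hs0 hs1 hpk)
      (rpow_nonneg hs0 _) hc0
  have hsc : c ^ (p - k) * s ^ (k : ℝ) ≤ c * s :=
    mul_le_mul (rpow_le_self_of_le_one hc0 hc1 hpk) (rpow_le_self_of_le_one hs0 hs1 hk1)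
      (rpow_nonneg hs0 _) hc0
  have hcoeff : 0 ≤ genBinom p k * (X ^ (k : ℝ) * Y ^ (p - k) + X ^ (p - k) * Y ^ (k : ℝ)) :=
    mul_nonneg (genBinom_nonneg (by linarith)) (by positivity)
  simp only [mul_rpow hX hc0, mul_rpow hX hs0, mul_rpow hY hc0, mul_rpow hY hs0]
  calc _ = genBinom p k * (X ^ (k : ℝ) * Y ^ (p - k) + X ^ (p - k) * Y ^ (k : ℝ))
          * (c ^ (k : ℝ) * s ^ (p - k) + c ^ (p - k) * s ^ (k : ℝ)) := by ring
    _ ≤ genBinom p k * (X ^ (k : ℝ) * Y ^ (p - k) + X ^ (p - k) * Y ^ (k : ℝ)) * (2 * (c * s)) :=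
        mul_le_mul_of_nonneg_left (by linarith) hcoeff
    _ = _ := by ring

theorem rpow_mix_add_rpow_mix_sub_le {p X Y c s : ℝ} (hp : 3 ≤ p) (hX : 0 ≤ X) (hY : 0 ≤ Y)
    (hc : 0 ≤ c) (hs : 0 ≤ s) (hcs : c + s = 1) :
    (X * c + Y * s) ^ p + (X * s + Y * c) ^ p - X ^ p - Y ^ p
      ≤ 2 * (c * s) * (symmBinomSum p X Y - X ^ p - Y ^ p) := by
  have hE := add_rpow_le (p := p) (by linarith) (mul_nonneg hX hc) (mul_nonneg hY hs)
  have hE' := add_rpow_le (p := p) (by linarith) (mul_nonneg hX hs) (mul_nonneg hY hc)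
  rw [mul_rpow hX hc, mul_rpow hY hs] at hE
  rw [mul_rpow hX hs, mul_rpow hY hc] at hE'
  have hmix := symmBinomSum_mul_add_le hp hX hY hc (by linarith) hs (by linarith)
  have hpow : c ^ p + s ^ p ≤ c ^ 2 + s ^ 2 := by
    rw [← rpow_two, ← rpow_two]
    exact add_le_add (rpow_le_rpow_of_exponent_ge' hc (by linarith) zero_le_two (by linarith))
      (rpow_le_rpow_of_exponent_ge' hs (by linarith) zero_le_two (by linarith))
  have hsq : c ^ 2 + s ^ 2 = 1 - 2 * (c * s) := by
    rw [← one_pow 2, ← hcs]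
    ring
  rw [hsq] at hpow
  have := mul_le_mul_of_nonneg_left hpow (add_nonneg (rpow_nonneg hX p) (rpow_nonneg hY p))
  linear_combination hE + hE' + hmix + this

/-- **inequality (3.16).** For real `p ≥ 3` (`k_p = ⌊(p+1)/2⌋`),
`X, Y ≥ 0`, `θ ∈ (0,π)`, with `E = X cos²(θ/2) + Y sin²(θ/2)` and
`Ē = X sin²(θ/2) + Y cos²(θ/2)`:
`(E^p + Ē^p - X^p - Y^p)/sin²θ ≤ -(X^p+Y^p)/2 + (1/2) Σ_{k=1}^{k_p} C(p,k)(X^k Y^{p-k} + X^{p-k} Y^k)`. -/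
theorem povzner_core_inequality (p : ℝ) (hp : 3 ≤ p) (X Y : ℝ)
    (hX : 0 ≤ X) (hY : 0 ≤ Y) (θ : ℝ) (hθ : θ ∈ Set.Ioo 0 π) :
    (Real.sin θ ^ 2)⁻¹ *
        ((X * Real.cos (θ / 2) ^ 2 + Y * Real.sin (θ / 2) ^ 2) ^ p
          + (X * Real.sin (θ / 2) ^ 2 + Y * Real.cos (θ / 2) ^ 2) ^ p
          - X ^ p - Y ^ p)
      ≤ -(1 / 2) * (X ^ p + Y ^ p)
        + (1 / 2) * ∑ k ∈ Finset.Icc 1 ⌊(p + 1) / 2⌋₊,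
            genBinom p k * (X ^ (k : ℝ) * Y ^ (p - k) + X ^ (p - k) * Y ^ (k : ℝ)) := by
  obtain ⟨hθ0, hθπ⟩ := hθ
  have hcos : 0 < cos (θ / 2) := cos_pos_of_mem_Ioo ⟨by linarith, by linarith⟩
  have hsin : 0 < sin (θ / 2) := sin_pos_of_pos_of_lt_pi (by linarith) (by linarith)
  have hsin_sq : sin θ ^ 2 = 4 * (cos (θ / 2) ^ 2 * sin (θ / 2) ^ 2) := by
    have h := sin_two_mul (θ / 2)
    rw [mul_div_cancel₀ θ two_ne_zero] at h
    rw [h]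
    ring
  have hmix := rpow_mix_add_rpow_mix_sub_le hp hX hY (sq_nonneg (cos (θ / 2)))
    (sq_nonneg (sin (θ / 2))) (cos_sq_add_sin_sq (θ / 2))
  rw [hsin_sq, inv_mul_le_iff₀ (by positivity)]
  unfold symmBinomSum at hmix
  linarith
end

section
/- Let A > 0, B > 0, ε > 0 and define Y(t) := ( A / ( B (1 − e^{−εAt}) ) )^{1/ε} for t > 0. Let u : (0,∞) → [0,∞) and suppose there exists a locally integrable function g on (0,∞) such that u(t₂) − u(t₁) = ∫_{t₁}^{t₂} g(s) ds for all 0 < t₁ ≤ t₂ < ∞, and such that for almost every t ∈ (0,∞) with u(t) > Y(t) one has g(t) ≤ A u(t) − B u(t)^{1+ε}. Then u(t) ≤ Y(t) for all t ∈ (0,∞). -/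
/-!
For `δ > 0` the shifted solution `Z = Y (· - δ)` blows up at `δ`, so `u < Z` just to the right
of `δ`. Wherever `u > Z` we also have `u > Y`, as `Y` decreases; there
`(u - Z)' ≤ f u - f Z ≤ A (u - Z)` with `f y = A y - B y ^ (1 + ε)`, because `y ↦ B y ^ (1 + ε)`
increases. An integral Grönwall argument started at the last point where `u ≤ Z` then gives
`u ≤ Z` everywhere after `δ`, and letting `δ → 0` gives `u ≤ Y`.
-/

open Real MeasureTheory intervalIntegral Filter Set Topology

noncomputable def bernoulliBlowup (A B ε t : ℝ) : ℝ :=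
  (A / (B * (1 - exp (-(ε * A * t))))) ^ (1 / ε)

section bernoulliBlowup

variable {A B ε : ℝ}

theorem one_sub_exp_neg_mul_pos {k t : ℝ} (hk : 0 < k) (ht : 0 < t) : 0 < 1 - exp (-(k * t)) :=
  sub_pos.2 (exp_lt_one_iff.2 (neg_neg_of_pos (mul_pos hk ht)))

theorem bernoulliBlowup_base_pos (hA : 0 < A) (hB : 0 < B) (hε : 0 < ε) {t : ℝ} (ht : 0 < t) :
    0 < A / (B * (1 - exp (-(ε * A * t)))) :=
  div_pos hA (mul_pos hB (one_sub_exp_neg_mul_pos (mul_pos hε hA) ht))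

theorem bernoulliBlowup_pos (hA : 0 < A) (hB : 0 < B) (hε : 0 < ε) {t : ℝ} (ht : 0 < t) :
    0 < bernoulliBlowup A B ε t :=
  rpow_pos_of_pos (bernoulliBlowup_base_pos hA hB hε ht) _

theorem bernoulliBlowup_antitoneOn (hA : 0 < A) (hB : 0 < B) (hε : 0 < ε) :
    AntitoneOn (bernoulliBlowup A B ε) (Ioi 0) := by
  intro s hs t ht hst
  have hεA := mul_pos hε hA
  have hexp : exp (-(ε * A * t)) ≤ exp (-(ε * A * s)) := exp_le_exp.2 (by nlinarith)
  unfold bernoulliBlowup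
  gcongr
  · exact (bernoulliBlowup_base_pos hA hB hε ht).le
  · exact mul_pos hB (one_sub_exp_neg_mul_pos hεA hs)

theorem hasDerivAt_bernoulliBlowup (hA : 0 < A) (hB : 0 < B) (hε : 0 < ε) {t : ℝ} (ht : 0 < t) :
    HasDerivAt (bernoulliBlowup A B ε)
      (A * bernoulliBlowup A B ε t - B * bernoulliBlowup A B ε t ^ (1 + ε)) t := by
  have hm := one_sub_exp_neg_mul_pos (mul_pos hε hA) ht
  have hc := bernoulliBlowup_base_pos hA hB hε ht
  set c := A / (B * (1 - exp (-(ε * A * t))))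
  have hbase :
      HasDerivAt (fun s => A / (B * (1 - exp (-(ε * A * s))))) (ε * c * (A - B * c)) t := by
    have hlin : HasDerivAt (fun s => -(ε * A * s)) (-(ε * A)) t := by
      simpa [Pi.neg_def] using ((hasDerivAt_id t).const_mul (ε * A)).neg
    refine ((hasDerivAt_const t A).div ((hlin.exp.const_sub 1).const_mul B)
      (by positivity)).congr_deriv ?_
    simp only [c]
    field_simp
    ring
  have hsub : c ^ (1 / ε - 1) = c ^ (1 / ε) / c := by rw [rpow_sub hc, rpow_one]
  have hpow : (c ^ (1 / ε)) ^ (1 + ε) = c ^ (1 / ε) * c := by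
    rw [← rpow_mul hc.le, show 1 / ε * (1 + ε) = 1 / ε + 1 by field_simp, rpow_add hc, rpow_one]
  refine (hbase.rpow_const (p := 1 / ε) (Or.inl hc.ne')).congr_deriv ?_
  change ε * c * (A - B * c) * (1 / ε) * c ^ (1 / ε - 1)
    = A * c ^ (1 / ε) - B * (c ^ (1 / ε)) ^ (1 + ε)
  rw [hsub, hpow]
  field_simp

theorem tendsto_bernoulliBlowup_nhdsGT_zero (hA : 0 < A) (hB : 0 < B) (hε : 0 < ε) :
    Tendsto (bernoulliBlowup A B ε) (𝓝[>] 0) atTop := by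
  have hden : Tendsto (fun s => B * (1 - exp (-(ε * A * s)))) (𝓝[>] 0) (𝓝[>] 0) := by
    refine tendsto_nhdsWithin_of_tendsto_nhds_of_eventually_within _ ?_ ?_
    · exact ((by fun_prop : Continuous fun s => B * (1 - exp (-(ε * A * s)))).tendsto' 0 0
        (by simp)).mono_left nhdsWithin_le_nhds
    · filter_upwards [self_mem_nhdsWithin] with s hs
      exact mul_pos hB (one_sub_exp_neg_mul_pos (mul_pos hε hA) hs)
  have hbase := (tendsto_inv_nhdsGT_zero.comp hden).const_mul_atTop hA
  unfold bernoulliBlowup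
  simpa [div_eq_mul_inv, Function.comp_def] using
    (tendsto_rpow_atTop (one_div_pos.2 hε)).comp hbase

end bernoulliBlowup

theorem forall_nonpos_of_sub_le_mul_integral {w : ℝ → ℝ} {L c x : ℝ} (hL : 0 ≤ L)
    (hLx : L * (x - c) < 1) (hw : ContinuousOn w (Icc c x)) (hc : w c ≤ 0)
    (h : ∀ p ∈ Icc c x, w p - w c ≤ L * ∫ s in c..p, w s) :
    ∀ p ∈ Icc c x, w p ≤ 0 := by
  rcases (Icc c x).eq_empty_or_nonempty with hempty | hne
  · simp [hempty]
  obtain ⟨q, hq, hmax⟩ := isCompact_Icc.exists_isMaxOn hne hw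
  suffices w q ≤ 0 from fun p hp => (hmax hp).trans this
  -- at a maximum point `q`, `w q ≤ L (q - c) w q`, and `L (q - c) < 1`
  by_contra! hpos
  have hint : ∫ s in c..q, w s ≤ (q - c) * w q := by
    have hwq : IntervalIntegrable w volume c q :=
      (hw.mono (Icc_subset_Icc_right hq.2)).intervalIntegrable_of_Icc hq.1
    simpa using integral_mono_on hq.1 hwq (intervalIntegrable_const (μ := volume))
      fun s hs => hmax ⟨hs.1, hs.2.trans hq.2⟩
  have : L * (q - c) * w q < w q := by
    calc L * (q - c) * w q ≤ L * (x - c) * w q := by gcongr; exact hq.2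
      _ < w q := by nlinarith
  nlinarith [h q hq]

theorem nonpos_of_sub_le_mul_integral_of_pos {w : ℝ → ℝ} {L a b : ℝ} (hL : 0 ≤ L) (hab : a ≤ b)
    (hw : ContinuousOn w (Icc a b)) (ha : w a ≤ 0)
    (h : ∀ c x, a ≤ c → c ≤ x → x ≤ b → (∀ s ∈ Ioc c x, 0 < w s) →
      w x - w c ≤ L * ∫ s in c..x, w s) :
    w b ≤ 0 := by
  by_contra! hb
  set S := Icc a b ∩ w ⁻¹' Iic 0
  have hS : IsCompact S :=
    isCompact_Icc.of_isClosed_subset (hw.preimage_isClosed_of_isClosed isClosed_Icc isClosed_Iic)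
      inter_subset_left
  obtain ⟨c, ⟨⟨hac, hcb⟩, hc⟩, hcmax⟩ := hS.exists_isGreatest ⟨a, ⟨le_rfl, hab⟩, ha⟩
  have hpos : ∀ s ∈ Ioc c b, 0 < w s := fun s hs => by
    by_contra! hs'
    exact (hs.1.trans_le (hcmax ⟨⟨hac.trans hs.1.le, hs.2⟩, hs'⟩)).false
  have hcb' : c < b := lt_of_le_of_ne hcb fun h => (h ▸ hb).not_ge hc
  set x := min b (c + (L + 1)⁻¹)
  have hcx : c < x := lt_min hcb' (by simp; positivity)
  have hLx : L * (x - c) < 1 := by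
    calc L * (x - c) ≤ L * (L + 1)⁻¹ := by gcongr; linarith [min_le_right b (c + (L + 1)⁻¹)]
      _ < 1 := by rw [← div_eq_mul_inv, div_lt_one (by positivity)]; linarith
  have hxb : x ≤ b := min_le_left _ _
  have := forall_nonpos_of_sub_le_mul_integral hL hLx (hw.mono (Icc_subset_Icc hac hxb)) hc
    (fun p hp => h c p hac hp.1 (hp.2.trans hxb)
      fun s hs => hpos s ⟨hs.1, hs.2.trans (hp.2.trans hxb)⟩) x ⟨hcx.le, le_rfl⟩
  exact (hpos x ⟨hcx, hxb⟩).not_ge this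

theorem sub_sub_le_mul_integral_of_ae_le {u g Z Z' : ℝ → ℝ} {L c x : ℝ} (hcx : c ≤ x)
    (hg : IntervalIntegrable g volume c x) (hu : ContinuousOn u (Icc c x))
    (hftc : u x - u c = ∫ s in c..x, g s)
    (hZ : ∀ s ∈ Icc c x, HasDerivAt Z (Z' s) s) (hZ' : ContinuousOn Z' (Icc c x))
    (hle : ∀ᵐ s ∂volume, s ∈ Ioc c x → g s ≤ Z' s + L * (u s - Z s)) :
    (u x - Z x) - (u c - Z c) ≤ L * ∫ s in c..x, (u s - Z s) := by
  have hZcont : ContinuousOn Z (Icc c x) := fun s hs => (hZ s hs).continuousAt.continuousWithinAt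
  have hZ'int : IntervalIntegrable Z' volume c x := hZ'.intervalIntegrable_of_Icc hcx
  have hwint : IntervalIntegrable (fun s => u s - Z s) volume c x :=
    (hu.sub hZcont).intervalIntegrable_of_Icc hcx
  have hmono : ∫ s in c..x, g s ≤ ∫ s in c..x, (Z' s + L * (u s - Z s)) := by
    rw [integral_of_le hcx, integral_of_le hcx]
    exact setIntegral_mono_ae_restrict hg.1 (hZ'int.add (hwint.const_mul L)).1
      ((ae_restrict_iff' measurableSet_Ioc).2 hle)
  have hZftc : ∫ s in c..x, Z' s = Z x - Z c :=
    integral_eq_sub_of_hasDerivAt (fun s hs => hZ s (uIcc_of_le hcx ▸ hs)) hZ'int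
  rw [integral_add hZ'int (hwint.const_mul L), intervalIntegral.integral_const_mul, hZftc] at hmono
  linarith

theorem continuousOn_of_sub_eq_integral {u g : ℝ → ℝ} {a : ℝ}
    (hg : ∀ t₁ t₂, a < t₁ → t₁ ≤ t₂ → IntervalIntegrable g volume t₁ t₂)
    (hu : ∀ t₁ t₂, a < t₁ → t₁ ≤ t₂ → u t₂ - u t₁ = ∫ s in t₁..t₂, g s) :
    ContinuousOn u (Ioi a) := by
  intro t ht
  obtain ⟨c, hac, hct⟩ := exists_between (show a < t from ht)
  have hprim : ContinuousOn (fun x => u c + ∫ s in c..x, g s) (Icc c (t + 1)) := by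
    have := continuousOn_primitive_interval' (hg c (t + 1) hac (by linarith)) left_mem_uIcc
    rw [uIcc_of_le (by linarith)] at this
    exact continuousOn_const.add this
  have heq : (fun x => u c + ∫ s in c..x, g s) =ᶠ[𝓝 t] u := by
    filter_upwards [Ioi_mem_nhds hct] with x hx
    linarith [hu c x hac hx.le]
  exact ((hprim.continuousAt (Icc_mem_nhds hct (by linarith))).congr heq).continuousWithinAt

theorem exists_lt_bernoulliBlowup_sub {A B ε : ℝ} (hA : 0 < A) (hB : 0 < B) (hε : 0 < ε)
    {u : ℝ → ℝ} {δ t : ℝ} (hu : ContinuousAt u δ) (hδt : δ < t) :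
    ∃ a ∈ Ioo δ t, u a < bernoulliBlowup A B ε (a - δ) := by
  have hshift : Tendsto (fun s => s - δ) (𝓝[>] δ) (𝓝[>] 0) := by
    refine tendsto_nhdsWithin_of_tendsto_nhds_of_eventually_within _ ?_ ?_
    · exact ((continuous_sub_right δ).tendsto' δ 0 (sub_self δ)).mono_left nhdsWithin_le_nhds
    · filter_upwards [self_mem_nhdsWithin] with s (hs : δ < s) using sub_pos.2 hs
  have hY_top := ((tendsto_bernoulliBlowup_nhdsGT_zero hA hB hε).comp hshift).eventually_gt_atTop
    (u δ + 1)
  have hu_bdd : ∀ᶠ s in 𝓝[>] δ, u s < u δ + 1 :=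
    (hu.eventually_lt_const (lt_add_one _)).filter_mono nhdsWithin_le_nhds
  obtain ⟨a, ⟨hua, hYa⟩, ha⟩ := ((hu_bdd.and hY_top).and (Ioo_mem_nhdsGT hδt)).exists
  exact ⟨a, ha, hua.trans hYa⟩

theorem le_bernoulliBlowup_sub {A B ε : ℝ} (hA : 0 < A) (hB : 0 < B) (hε : 0 < ε) {u g : ℝ → ℝ}
    (hgint : ∀ t₁ t₂ : ℝ, 0 < t₁ → t₁ ≤ t₂ → IntervalIntegrable g volume t₁ t₂)
    (hftc : ∀ t₁ t₂ : ℝ, 0 < t₁ → t₁ ≤ t₂ → u t₂ - u t₁ = ∫ s in t₁..t₂, g s)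
    (hode : ∀ᵐ t : ℝ ∂volume, 0 < t → bernoulliBlowup A B ε t < u t →
      g t ≤ A * u t - B * u t ^ (1 + ε))
    {δ t : ℝ} (hδ : 0 < δ) (hδt : δ < t) :
    u t ≤ bernoulliBlowup A B ε (t - δ) := by
  have hu : ContinuousOn u (Ioi 0) := continuousOn_of_sub_eq_integral hgint hftc
  set Z := fun s => bernoulliBlowup A B ε (s - δ)
  have hZ : ∀ s, δ < s → HasDerivAt Z (A * Z s - B * Z s ^ (1 + ε)) s := fun s hs =>
    (hasDerivAt_bernoulliBlowup hA hB hε (sub_pos.2 hs)).comp_sub_const s δ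
  obtain ⟨a, ha, haZ⟩ :=
    exists_lt_bernoulliBlowup_sub hA hB hε (hu.continuousAt (Ioi_mem_nhds hδ)) hδt
  have hw : ContinuousOn (fun s => u s - Z s) (Icc a t) := fun s hs =>
    ((hu.continuousAt (Ioi_mem_nhds (hδ.trans_le (ha.1.le.trans hs.1)))).sub
      (hZ s (ha.1.trans_le hs.1)).continuousAt).continuousWithinAt
  suffices u t - Z t ≤ 0 from sub_nonpos.1 this
  refine nonpos_of_sub_le_mul_integral_of_pos (w := fun s => u s - Z s) hA.le ha.2.le hw
    (sub_nonpos.2 haZ.le) fun c x hac hcx hxt hpos => ?_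
  have hδc : δ < c := ha.1.trans_le hac
  refine sub_sub_le_mul_integral_of_ae_le hcx (hgint c x (hδ.trans hδc) hcx)
    (hu.mono fun s hs => hδ.trans (hδc.trans_le hs.1)) (hftc c x (hδ.trans hδc) hcx)
    (fun s hs => hZ s (hδc.trans_le hs.1)) (fun s hs => ?_) ?_
  · have hZs := (hZ s (hδc.trans_le hs.1)).continuousAt
    exact ((continuousAt_const.mul hZs).sub (continuousAt_const.mul
      (hZs.rpow_const (Or.inr (by positivity))))).continuousWithinAt
  filter_upwards [hode] with s hs hsI
  have hs0 : 0 < s - δ := sub_pos.2 (hδc.trans hsI.1)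
  have hZu : Z s < u s := sub_pos.1 (hpos s hsI)
  have hYZ : bernoulliBlowup A B ε s ≤ Z s :=
    bernoulliBlowup_antitoneOn hA hB hε hs0 (hs0.trans (sub_lt_self s hδ)) (sub_le_self s hδ.le)
  have hpow : Z s ^ (1 + ε) ≤ u s ^ (1 + ε) :=
    rpow_le_rpow (bernoulliBlowup_pos hA hB hε hs0).le hZu.le (by positivity)
  linarith [hs (by linarith) (hYZ.trans_lt hZu), mul_le_mul_of_nonneg_left hpow hB.le]

theorem ode_comparison_general (A B ε : ℝ) (hA : 0 < A) (hB : 0 < B) (hε : 0 < ε)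
    (u g : ℝ → ℝ)
    (hgint : ∀ t₁ t₂ : ℝ, 0 < t₁ → t₁ ≤ t₂ → IntervalIntegrable g volume t₁ t₂)
    (hftc : ∀ t₁ t₂ : ℝ, 0 < t₁ → t₁ ≤ t₂ → u t₂ - u t₁ = ∫ s in t₁..t₂, g s)
    (hode : ∀ᵐ t : ℝ ∂volume, 0 < t →
      (A / (B * (1 - Real.exp (-(ε * A * t))))) ^ (1 / ε) < u t →
      g t ≤ A * u t - B * u t ^ (1 + ε)) :
    ∀ t : ℝ, 0 < t → u t ≤ (A / (B * (1 - Real.exp (-(ε * A * t))))) ^ (1 / ε) := by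
  intro t ht
  have hshift : Tendsto (fun δ => t - δ) (𝓝[>] 0) (𝓝 t) :=
    ((continuous_sub_left t).tendsto' 0 t (sub_zero t)).mono_left nhdsWithin_le_nhds
  have hY := (hasDerivAt_bernoulliBlowup hA hB hε ht).continuousAt.tendsto.comp hshift
  refine ge_of_tendsto hY ?_
  filter_upwards [Ioo_mem_nhdsGT ht] with δ hδ
  exact le_bernoulliBlowup_sub hA hB hε hgint hftc hode hδ.1 hδ.2

/-- **Lemma 3.7 (II), ODE comparison.** Let `A, B, ε > 0` and
`Y(t) = (A/(B(1-e^{-εAt})))^{1/ε}` for `t > 0`. If `u : (0,∞) → [0,∞)` is absolutely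
continuous on compact subintervals of `(0,∞)` with a.e. derivative `g` satisfying
`g(t) ≤ A u(t) - B u(t)^{1+ε}` for a.e. `t` with `u(t) > Y(t)`, then `u ≤ Y` on `(0,∞)`. -/
theorem ode_comparison (A B ε : ℝ) (hA : 0 < A) (hB : 0 < B) (hε : 0 < ε)
    (u g : ℝ → ℝ) (hu0 : ∀ t : ℝ, 0 < t → 0 ≤ u t)
    (hgint : ∀ t₁ t₂ : ℝ, 0 < t₁ → t₁ ≤ t₂ → IntervalIntegrable g volume t₁ t₂)
    (hftc : ∀ t₁ t₂ : ℝ, 0 < t₁ → t₁ ≤ t₂ → u t₂ - u t₁ = ∫ s in t₁..t₂, g s)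
    (hode : ∀ᵐ t : ℝ ∂volume, 0 < t →
      (A / (B * (1 - Real.exp (-(ε * A * t))))) ^ (1 / ε) < u t →
      g t ≤ A * u t - B * u t ^ (1 + ε)) :
    ∀ t : ℝ, 0 < t → u t ≤ (A / (B * (1 - Real.exp (-(ε * A * t))))) ^ (1 / ε) :=
  ode_comparison_general A B ε hA hB hε u g hgint hftc hode
end
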